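/- arXiv:2509.22084 — 4 statements merged into one kernel-verified Lean document; each statement's English description precedes it below -/
import Mathlib

section
/- Let β ∈ (0,1) and M ≥ 100, and let E_{β,M} be the Cantor set whose generating intervals satisfy |I_ω| = ℓ(ω) with ℓ(ω_1…ω_n) = (a_{ω_1}⋯a_{ω_{⌊βn⌋}}) / (a_{ω_1}⋯a_{ω_n})^β · M^{−n}, where a_0 = 1, a_1 = 2. Then the maps φ_0, φ_1 defined via the Cantor construction of E_{β,M} are bi-Lipschitz contractions on [0,1], and the collection {φ_0, φ_1} is a bi-Lipschitz IFS whose attractor is E_{β,M}. -/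
open Filter Set Metric MeasureTheory Topology
open scoped ENNReal

/-- Minimal number of closed intervals of diameter at most `δ` (i.e. closed balls of
radius `δ/2`) needed to cover `E`. -/
noncomputable def coverNum (E : Set ℝ) (δ : ℝ) : ℕ :=
  sInf {n : ℕ | ∃ c : Fin n → ℝ, E ⊆ ⋃ i, Metric.closedBall (c i) (δ / 2)}

/-- Lower box dimension of a set `E ⊆ ℝ`. -/
noncomputable def lowerBoxDim (E : Set ℝ) : ℝ :=
  Filter.liminf (fun δ : ℝ => Real.log (coverNum E δ) / (-Real.log δ)) (𝓝[>] 0)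

/-- Upper box dimension of a set `E ⊆ ℝ`. -/
noncomputable def upperBoxDim (E : Set ℝ) : ℝ :=
  Filter.limsup (fun δ : ℝ => Real.log (coverNum E δ) / (-Real.log δ)) (𝓝[>] 0)

/-- Assouad dimension of a set `E ⊆ ℝ`. -/
noncomputable def assouadDim (E : Set ℝ) : ℝ :=
  Filter.limsup (fun r : ℝ =>
      ⨆ R : Set.Ioi (0:ℝ), ⨆ x : E,
        Real.log (coverNum (E ∩ Set.Icc ((x:ℝ) - (R:ℝ)) ((x:ℝ) + (R:ℝ))) ((R:ℝ) * r)) /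
          Real.log (1 / r))
    (𝓝[>] 0)

/-- Lower dimension of a set `E ⊆ ℝ`. -/
noncomputable def lowerDim (E : Set ℝ) : ℝ :=
  Filter.liminf (fun r : ℝ =>
      ⨅ R : Set.Ioo (0:ℝ) 1, ⨅ x : E,
        Real.log (coverNum (E ∩ Set.Icc ((x:ℝ) - (R:ℝ)) ((x:ℝ) + (R:ℝ))) ((R:ℝ) * r)) /
          Real.log (1 / r))
    (𝓝[>] 0)

/-- Lower local dimension of a measure `μ` at `x`. -/
noncomputable def lowerLocalDim (μ : Measure ℝ) (x : ℝ) : ℝ :=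
  Filter.liminf (fun δ : ℝ => Real.log ((μ (Metric.closedBall x δ)).toReal) / Real.log δ) (𝓝[>] 0)

/-- Upper local dimension of a measure `μ` at `x`. -/
noncomputable def upperLocalDim (μ : Measure ℝ) (x : ℝ) : ℝ :=
  Filter.limsup (fun δ : ℝ => Real.log ((μ (Metric.closedBall x δ)).toReal) / Real.log δ) (𝓝[>] 0)

/-- Binary entropy function (note that `Real.log 0 = 0` in Mathlib, which implements the
convention `0 log 0 = 0`). -/
noncomputable def Hent (p : ℝ) : ℝ := -(p * Real.log p) - (1 - p) * Real.log (1 - p)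

/-- `D(λ) = max_{(p,q) ∈ [0,1]²} (βH(p) + (1-β)H(q)) / (λ + β(1-β)(q-p) log 2)`. -/
noncomputable def Dfun (β lam : ℝ) : ℝ :=
  sSup ((fun pq : ℝ × ℝ =>
    (β * Hent pq.1 + (1 - β) * Hent pq.2) /
      (lam + β * (1 - β) * (pq.2 - pq.1) * Real.log 2)) '' (Set.Icc 0 1 ×ˢ Set.Icc 0 1))

/-- `a_0 = 1`, `a_1 = 2`. -/
noncomputable def aBit (b : Bool) : ℝ := if b then 2 else 1

/-- The length function `ℓ(ω₁…ωₙ) = (a_{ω₁}⋯a_{ω_{⌊βn⌋}}) / (a_{ω₁}⋯a_{ω_n})^β · M^{-n}`.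
A finite word `ω₁…ωₙ` is encoded as the list `[ω₁, …, ωₙ]`. -/
noncomputable def ellBM (β M : ℝ) (w : List Bool) : ℝ :=
  ((w.take ⌊β * (w.length : ℝ)⌋₊).map aBit).prod / ((w.map aBit).prod) ^ β *
    M ^ (-(w.length : ℝ))

/-- The length function `ℓ*(ω₁…ωₙ) = (a_{ω₁}⋯a_{ω_{⌊βn⌋}}) / (a_{ω₁}⋯a_{ω_n})^β ·
(∏_{i=1}^n M_i)⁻¹`. -/
noncomputable def ellStar (β : ℝ) (Mseq : ℕ → ℝ) (w : List Bool) : ℝ :=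
  ((w.take ⌊β * (w.length : ℝ)⌋₊).map aBit).prod / ((w.map aBit).prod) ^ β *
    (∏ i ∈ Finset.range w.length, Mseq (i + 1))⁻¹

/-- The left endpoint of the generating interval `I_w` of the Cantor set determined by the
length function `ℓ` (in the standard construction, the left child shares the left endpoint of
its parent and the right child shares the right endpoint, so the endpoints are determined by
`ℓ`): passing from a prefix `p` to `p·1` moves the left endpoint by `ℓ(p) - ℓ(p·1)`. -/
noncomputable def leftEnd (ℓ : List Bool → ℝ) (w : List Bool) : ℝ :=
  ∑ k ∈ Finset.range w.length,
    if w.getD k false = true then ℓ (w.take k) - ℓ (w.take (k + 1)) else 0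

/-- Right endpoint of the generating interval `I_w`. -/
noncomputable def rightEnd (ℓ : List Bool → ℝ) (w : List Bool) : ℝ := leftEnd ℓ w + ℓ w

/-- The Cantor set determined by the length function `ℓ`:
`E = ⋂_n ⋃_{|w| = n} I_w` with `I_w = [leftEnd ℓ w, rightEnd ℓ w]`. -/
noncomputable def cantorOf (ℓ : List Bool → ℝ) : Set ℝ :=
  ⋂ n : ℕ, ⋃ (w : List Bool) (_ : w.length = n), Set.Icc (leftEnd ℓ w) (rightEnd ℓ w)

/-- The coding map `π : Ω^ℕ → E` associated with left-endpoint function `l`: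
`π(ω) = sup_n l(ω₁…ωₙ)` (the prefixes' left endpoints increase to `π(ω)`). -/
noncomputable def codeMapL (l : List Bool → ℝ) (ω : ℕ → Bool) : ℝ :=
  ⨆ n : ℕ, l (List.ofFn fun k : Fin n => ω k)

/-- Prepend the symbol `i` to an infinite word: `iω`. -/
def consSeq (i : Bool) (ω : ℕ → Bool) : ℕ → Bool := fun n => if n = 0 then i else ω (n - 1)

/-- The set of ratios `{ |I_{iω}|/|I_ω| : ω ∈ Ω* } ∪ { |G_{iω}|/|G_ω| : ω ∈ Ω* }` for a Cantor
construction with generating intervals `I_w = [l w, r w]` and gaps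
`G_w = (r (w0), l (w1))`. -/
def ratioSet (l r : List Bool → ℝ) (i : Bool) : Set ℝ :=
  (Set.range fun w : List Bool => (r (i :: w) - l (i :: w)) / (r w - l w)) ∪
  (Set.range fun w : List Bool =>
    (l ((i :: w) ++ [true]) - r ((i :: w) ++ [false])) /
      (l (w ++ [true]) - r (w ++ [false])))

/-- `u_n` in the additive representation of the symmetric Cantor set (`0`-indexed, so `c 0`
is the first ratio `c₁`). -/
noncomputable def uSym (c : ℕ → ℝ) (n : ℕ) : ℝ := (∏ j ∈ Finset.range n, c j) * (1 - c n)

/-- The coding map of the symmetric Cantor set: `π(ω) = Σ_n ω_n u_n`. -/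
noncomputable def piSym (c : ℕ → ℝ) (ω : ℕ → Bool) : ℝ := ∑' n, if ω n then uSym c n else 0

/-- The symmetric Cantor set `E_c = { Σ_n ω_n u_n : ω ∈ {0,1}^ℕ }`. -/
noncomputable def symCantor (c : ℕ → ℝ) : Set ℝ := Set.range (piSym c)

/-- Left endpoint of the generating interval `I_w` of the symmetric Cantor set. -/
noncomputable def lSym (c : ℕ → ℝ) (w : List Bool) : ℝ :=
  ∑ k ∈ Finset.range w.length, if w.getD k false = true then uSym c k else 0

/-- Right endpoint of the generating interval `I_w` of the symmetric Cantor set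
(`|I_w| = c₁⋯c_n` for `|w| = n`). -/
noncomputable def rSym (c : ℕ → ℝ) (w : List Bool) : ℝ :=
  lSym c w + ∏ j ∈ Finset.range w.length, c j

/-- Support of a Borel measure on `ℝ`: points all of whose neighbourhoods have positive
measure. -/
def measSupport (μ : Measure ℝ) : Set ℝ := {x | ∀ U ∈ 𝓝 x, 0 < μ U}

/-- `ν`-measure of the cylinder set `[b₁…bₙ]`, as a real number. -/
noncomputable def cylP (ν : Measure (ℕ → Bool)) {n : ℕ} (b : Fin n → Bool) : ℝ :=
  (ν {ω | ∀ i : Fin n, ω i = b i}).toReal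





lemma one_le_aBit (b : Bool) : 1 ≤ aBit b := by cases b <;> simp [aBit]
lemma aBit_le_two (b : Bool) : aBit b ≤ 2 := by cases b <;> norm_num [aBit]
lemma aBit_pos (b : Bool) : 0 < aBit b := lt_of_lt_of_le one_pos (one_le_aBit b)

noncomputable def prodA (w : List Bool) : ℝ := (w.map aBit).prod

lemma one_le_prodA (w : List Bool) : 1 ≤ prodA w := by
  induction w with
  | nil => simp [prodA]
  | cons a l ih =>
    have := one_le_aBit a
    simpa [prodA, List.map_cons] using one_le_mul_of_one_le_of_one_le this ih

lemma prodA_pos (w : List Bool) : 0 < prodA w := lt_of_lt_of_le one_pos (one_le_prodA w)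

lemma prodA_take_le_succ (w : List Bool) (m : ℕ) :
    prodA (w.take m) ≤ prodA (w.take (m + 1)) ∧
      prodA (w.take (m + 1)) ≤ 2 * prodA (w.take m) := by
  rw [List.take_succ]
  rcases h : w[m]? with _ | a
  · simp only [h, Option.toList, List.append_nil]
    constructor
    · exact le_refl _
    · nlinarith [one_le_prodA (w.take m)]
  · have heq : prodA (w.take m ++ [a]) = prodA (w.take m) * aBit a := by
      simp [prodA]
    simp only [h, Option.toList, heq]
    constructor
    · nlinarith [one_le_aBit a, prodA_pos (w.take m), one_le_prodA (w.take m)]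
    · nlinarith [aBit_le_two a, prodA_pos (w.take m)]

lemma prodA_take_le_two_mul (w : List Bool) {m m' : ℕ} (h1 : m ≤ m') (h2 : m' ≤ m + 1) :
    prodA (w.take m) ≤ prodA (w.take m') ∧ prodA (w.take m') ≤ 2 * prodA (w.take m) := by
  rcases eq_or_lt_of_le h1 with rfl | hlt
  · exact ⟨le_refl _, by nlinarith [one_le_prodA (w.take m)]⟩
  · have : m' = m + 1 := le_antisymm h2 hlt
    subst this
    exact prodA_take_le_succ w m

section Core
variable {β M : ℝ} (hβ0 : 0 < β) (hβ1 : β < 1) (hM : 0 < M)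

include hβ0 hβ1 in
lemma floor_succ_cases (n : ℕ) :
    ⌊β * ((n:ℝ))⌋₊ ≤ ⌊β * ((n:ℝ) + 1)⌋₊ ∧ ⌊β * ((n:ℝ) + 1)⌋₊ ≤ ⌊β * ((n:ℝ))⌋₊ + 1 ∧
      ⌊β * ((n:ℝ) + 1)⌋₊ ≤ n := by
  have h0 : (0:ℝ) ≤ β * n := by positivity
  refine ⟨Nat.floor_le_floor ?_, ?_, ?_⟩
  · nlinarith
  · have : β * ((n:ℝ) + 1) ≤ β * n + 1 := by nlinarith
    calc ⌊β * ((n:ℝ) + 1)⌋₊ ≤ ⌊β * (n:ℝ) + 1⌋₊ := Nat.floor_le_floor this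
      _ = ⌊β * (n:ℝ)⌋₊ + 1 := Nat.floor_add_one h0
  · have h : β * ((n:ℝ) + 1) < (n:ℝ) + 1 := by nlinarith
    have h2 := (Nat.floor_lt (show (0:ℝ) ≤ β * ((n:ℝ)+1) by positivity)).2
      (show β * ((n:ℝ)+1) < ((n+1 : ℕ) : ℝ) by push_cast; linarith)
    omega

lemma ellBM_pos (hM : 0 < M) (w : List Bool) : 0 < ellBM β M w := by
  unfold ellBM
  have h1 : (0:ℝ) < ((w.take ⌊β * (w.length : ℝ)⌋₊).map aBit).prod := prodA_pos _
  have h2 : (0:ℝ) < ((w.map aBit).prod) ^ β := Real.rpow_pos_of_pos (prodA_pos w) β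
  positivity

lemma ellBM_nil : ellBM β M [] = 1 := by
  simp [ellBM]

include hβ0 hβ1 hM in
/-- bounds for prepending a symbol -/
lemma ellBM_cons_bounds (i : Bool) (w : List Bool) :
    1 / (4 * M) * ellBM β M w ≤ ellBM β M (i :: w) ∧
      ellBM β M (i :: w) ≤ 2 / M * ellBM β M w := by
  set n := w.length with hn
  set m := ⌊β * (n:ℝ)⌋₊ with hm
  set m' := ⌊β * ((n:ℝ) + 1)⌋₊ with hm'
  obtain ⟨hmm', hm'm, hm'n⟩ := floor_succ_cases hβ0 hβ1 n
  set Num := prodA (w.take m) with hNum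
  set Num' := prodA ((i :: w).take m') with hNum'
  have hNumpos : 0 < Num := prodA_pos _
  have hNum'pos : 0 < Num' := prodA_pos _
  -- combinatorial core
  have hcore : Num / 2 ≤ Num' ∧ Num' ≤ 2 * Num := by
    rcases Nat.eq_zero_or_pos m' with h0 | hpos'
    · have hm0 : m = 0 := by omega
      have : Num' = 1 := by
        rw [hNum', h0]; simp [prodA]
      have h2 : Num = 1 := by rw [hNum, hm0]; simp [prodA]
      rw [this, h2]; norm_num
    · obtain ⟨k, hk⟩ := Nat.exists_eq_add_of_lt hpos'
      rw [zero_add] at hk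
      have htake : (i :: w).take m' = i :: w.take k := by rw [hk, List.take_succ_cons]
      have hNum'eq : Num' = aBit i * prodA (w.take k) := by
        rw [hNum', htake]; simp [prodA]
      have hkcases : k = m ∨ k + 1 = m := by omega
      rcases hkcases with rfl | hkm
      · constructor
        · rw [hNum'eq]; nlinarith [one_le_aBit i]
        · rw [hNum'eq]; nlinarith [aBit_le_two i]
      · have hpair := prodA_take_le_succ w k
        rw [hkm] at hpair
        obtain ⟨hp1, hp2⟩ := hpair
        constructor
        · rw [hNum'eq]; nlinarith [one_le_aBit i, prodA_pos (w.take k)]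
        · rw [hNum'eq]; nlinarith [aBit_le_two i, prodA_pos (w.take k)]
  -- rpow facts
  have hY1 : 1 ≤ (aBit i) ^ β := Real.one_le_rpow (one_le_aBit i) hβ0.le
  have hY2 : (aBit i) ^ β ≤ 2 := by
    calc (aBit i) ^ β ≤ (2:ℝ) ^ β :=
          Real.rpow_le_rpow (aBit_pos i).le (aBit_le_two i) hβ0.le
      _ ≤ (2:ℝ) ^ (1:ℝ) := Real.rpow_le_rpow_of_exponent_le one_le_two hβ1.le
      _ = 2 := Real.rpow_one 2
  have hYpos : (0:ℝ) < (aBit i) ^ β := lt_of_lt_of_le one_pos hY1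
  have hXpos : (0:ℝ) < (prodA w) ^ β := Real.rpow_pos_of_pos (prodA_pos w) β
  have hZpos : (0:ℝ) < M ^ (-(n:ℝ)) := Real.rpow_pos_of_pos hM _
  have hcons : ellBM β M (i :: w) =
      Num' / ((aBit i) ^ β * (prodA w) ^ β) * (M ^ (-(n:ℝ)) * M⁻¹) := by
    have hlen : (i :: w).length = n + 1 := by simp [hn]
    have hc : ((n + 1 : ℕ) : ℝ) = (n : ℝ) + 1 := by push_cast; ring
    rw [ellBM, hlen, hc]
    rw [show ((i :: w).map aBit).prod = aBit i * prodA w by simp [prodA]]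
    rw [Real.mul_rpow (aBit_pos i).le (prodA_pos w).le]
    rw [show (-((n:ℝ) + 1)) = (-(n:ℝ)) + (-1) by ring]
    rw [Real.rpow_add hM, Real.rpow_neg_one]
    rw [hNum', hm']
    simp [prodA]
  have hw : ellBM β M w = Num / (prodA w) ^ β * M ^ (-(n:ℝ)) := by
    rw [ellBM, hNum, hm, hn]
    simp [prodA]
  constructor
  · have key2 : Num / 4 ≤ Num' / (aBit i) ^ β := by
      rw [le_div_iff₀ hYpos]
      nlinarith [hcore.1]
    calc 1 / (4 * M) * ellBM β M w
        = (Num / 4) * (M ^ (-(n:ℝ)) / (prodA w) ^ β * M⁻¹) := by rw [hw]; ring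
      _ ≤ (Num' / (aBit i) ^ β) * (M ^ (-(n:ℝ)) / (prodA w) ^ β * M⁻¹) := by
          apply mul_le_mul_of_nonneg_right key2
          positivity
      _ = ellBM β M (i :: w) := by rw [hcons]; ring
  · have key : Num' / (aBit i) ^ β ≤ 2 * Num := by
      have h := div_le_self hNum'pos.le hY1
      linarith [hcore.2]
    calc ellBM β M (i :: w)
        = (Num' / (aBit i) ^ β) * (M ^ (-(n:ℝ)) / (prodA w) ^ β * M⁻¹) := by
          rw [hcons]; ring
      _ ≤ (2 * Num) * (M ^ (-(n:ℝ)) / (prodA w) ^ β * M⁻¹) := by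
          apply mul_le_mul_of_nonneg_right key
          positivity
      _ = 2 / M * ellBM β M w := by rw [hw]; ring

include hβ0 hβ1 hM in
/-- bound for appending a symbol -/
lemma ellBM_append_le (b : Bool) (w : List Bool) :
    ellBM β M (w ++ [b]) ≤ 2 / M * ellBM β M w := by
  set n := w.length with hn
  set m := ⌊β * (n:ℝ)⌋₊ with hm
  set m' := ⌊β * ((n:ℝ) + 1)⌋₊ with hm'
  obtain ⟨hmm', hm'm, hm'n⟩ := floor_succ_cases hβ0 hβ1 n
  set Num := prodA (w.take m) with hNum
  set Num' := prodA (w.take m') with hNum'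
  have hcore : Num' ≤ 2 * Num := (prodA_take_le_two_mul w hmm' hm'm).2
  have hY1 : 1 ≤ (aBit b) ^ β := Real.one_le_rpow (one_le_aBit b) hβ0.le
  have hYpos : (0:ℝ) < (aBit b) ^ β := lt_of_lt_of_le one_pos hY1
  have hXpos : (0:ℝ) < (prodA w) ^ β := Real.rpow_pos_of_pos (prodA_pos w) β
  have hNum'pos : 0 < Num' := prodA_pos _
  have hcons : ellBM β M (w ++ [b]) =
      Num' / ((prodA w) ^ β * (aBit b) ^ β) * (M ^ (-(n:ℝ)) * M⁻¹) := by
    have hlen : (w ++ [b]).length = n + 1 := by simp [hn]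
    have hc : ((n + 1 : ℕ) : ℝ) = (n : ℝ) + 1 := by push_cast; ring
    rw [ellBM, hlen, hc]
    rw [show ((w ++ [b]).map aBit).prod = prodA w * aBit b by simp [prodA]]
    rw [Real.mul_rpow (prodA_pos w).le (aBit_pos b).le]
    rw [show (-((n:ℝ) + 1)) = (-(n:ℝ)) + (-1) by ring]
    rw [Real.rpow_add hM, Real.rpow_neg_one]
    rw [List.take_append_of_le_length (by rw [← hn]; exact hm'n)]
    rw [hNum', hm']
    simp [prodA]
  have hw : ellBM β M w = Num / (prodA w) ^ β * M ^ (-(n:ℝ)) := by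
    rw [ellBM, hNum, hm, hn]
    simp [prodA]
  have key : Num' / (aBit b) ^ β ≤ 2 * Num := by
    have h := div_le_self hNum'pos.le hY1
    linarith
  calc ellBM β M (w ++ [b])
      = (Num' / (aBit b) ^ β) * (M ^ (-(n:ℝ)) / (prodA w) ^ β * M⁻¹) := by
        rw [hcons]; ring
    _ ≤ (2 * Num) * (M ^ (-(n:ℝ)) / (prodA w) ^ β * M⁻¹) := by
        apply mul_le_mul_of_nonneg_right key
        have hZpos : (0:ℝ) < M ^ (-(n:ℝ)) := Real.rpow_pos_of_pos hM _
        positivity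
    _ = 2 / M * ellBM β M w := by rw [hw]; ring
end Core






def pfx (ω : ℕ → Bool) (n : ℕ) : List Bool := List.ofFn fun k : Fin n => ω k

def seqOf (w : List Bool) (b : Bool) : ℕ → Bool := fun n => w.getD n b

lemma pfx_zero (ω : ℕ → Bool) : pfx ω 0 = [] := rfl

lemma pfx_length (ω : ℕ → Bool) (n : ℕ) : (pfx ω n).length = n := List.length_ofFn

lemma pfx_succ (ω : ℕ → Bool) (n : ℕ) : pfx ω (n + 1) = pfx ω n ++ [ω n] := by
  rw [pfx, List.ofFn_succ']
  simp [pfx, List.concat_eq_append]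

lemma pfx_add (ω : ℕ → Bool) (n k : ℕ) :
    pfx ω (n + k) = pfx ω n ++ pfx (fun j => ω (n + j)) k := by
  induction k with
  | zero => simp [pfx_zero]
  | succ k ih => rw [← Nat.add_assoc, pfx_succ, ih, pfx_succ, List.append_assoc]

lemma codeMapL_eq (l : List Bool → ℝ) (ω : ℕ → Bool) :
    codeMapL l ω = ⨆ n : ℕ, l (pfx ω n) := rfl

section Geom
variable {ℓ : List Bool → ℝ}

lemma leftEnd_nil : leftEnd ℓ [] = 0 := by simp [leftEnd]

lemma rightEnd_nil : rightEnd ℓ [] = ℓ [] := by simp [rightEnd, leftEnd_nil]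

lemma leftEnd_append (w : List Bool) (b : Bool) :
    leftEnd ℓ (w ++ [b]) =
      leftEnd ℓ w + (if b = true then ℓ w - ℓ (w ++ [b]) else 0) := by
  have hlen : (w ++ [b]).length = w.length + 1 := by simp
  rw [leftEnd, hlen, Finset.sum_range_succ]
  congr 1
  · rw [leftEnd]
    apply Finset.sum_congr rfl
    intro k hk
    have hk' : k < w.length := Finset.mem_range.mp hk
    rw [List.getD_append _ _ _ _ hk',
      List.take_append_of_le_length hk'.le,
      List.take_append_of_le_length (Nat.succ_le_of_lt hk')]
  · have h1 : (w ++ [b]).getD w.length false = b := by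
      rw [List.getD_append_right _ _ _ _ (le_refl _)]
      simp
    have h2 : (w ++ [b]).take w.length = w := List.take_left
    have h3 : (w ++ [b]).take (w.length + 1) = w ++ [b] :=
      List.take_of_length_le (by simp)
    rw [h1, h2, h3]

lemma leftEnd_append_false (w : List Bool) :
    leftEnd ℓ (w ++ [false]) = leftEnd ℓ w := by
  rw [leftEnd_append]; simp

lemma leftEnd_append_true (w : List Bool) :
    leftEnd ℓ (w ++ [true]) = leftEnd ℓ w + ℓ w - ℓ (w ++ [true]) := by
  rw [leftEnd_append]; simp; ring

lemma rightEnd_append_true (w : List Bool) :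
    rightEnd ℓ (w ++ [true]) = rightEnd ℓ w := by
  rw [rightEnd, rightEnd, leftEnd_append_true]; ring

lemma rightEnd_append_false (w : List Bool) :
    rightEnd ℓ (w ++ [false]) = leftEnd ℓ w + ℓ (w ++ [false]) := by
  rw [rightEnd, leftEnd_append_false]

lemma gap_eq (w : List Bool) :
    leftEnd ℓ (w ++ [true]) - rightEnd ℓ (w ++ [false]) =
      ℓ w - ℓ (w ++ [false]) - ℓ (w ++ [true]) := by
  rw [leftEnd_append_true, rightEnd_append_false]; ring

variable (hpos : ∀ w, 0 < ℓ w) (hdec : ∀ w b, ℓ (w ++ [b]) ≤ 2⁻¹ * 2⁻¹ * ℓ w)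

include hpos hdec

lemma subset_step (w : List Bool) (b : Bool) :
    leftEnd ℓ w ≤ leftEnd ℓ (w ++ [b]) ∧ rightEnd ℓ (w ++ [b]) ≤ rightEnd ℓ w := by
  have h1 := hdec w b
  have h2 := hpos w
  have h3 := hpos (w ++ [b])
  cases b
  · rw [leftEnd_append_false, rightEnd_append_false, rightEnd]
    constructor
    · exact le_refl _
    · nlinarith
  · rw [leftEnd_append_true, rightEnd_append_true]
    constructor
    · nlinarith
    · exact le_refl _

lemma gap_pos (w : List Bool) :
    rightEnd ℓ (w ++ [false]) < leftEnd ℓ (w ++ [true]) := by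
  have h := gap_eq (ℓ := ℓ) w
  have h1 := hdec w false
  have h2 := hdec w true
  have h3 := hpos w
  nlinarith

lemma nest_append (s : List Bool) : ∀ (w : List Bool),
    leftEnd ℓ w ≤ leftEnd ℓ (w ++ s) ∧ rightEnd ℓ (w ++ s) ≤ rightEnd ℓ w := by
  induction s with
  | nil => intro w; simp
  | cons b s ih =>
    intro w
    have h1 := subset_step hpos hdec w b
    have h2 := ih (w ++ [b])
    rw [List.append_assoc, List.singleton_append] at h2
    exact ⟨le_trans h1.1 h2.1, le_trans h2.2 h1.2⟩

lemma leftEnd_nonneg (w : List Bool) : 0 ≤ leftEnd ℓ w := by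
  have := (nest_append hpos hdec w []).1
  rwa [List.nil_append, leftEnd_nil] at this

lemma rightEnd_le_nil (w : List Bool) : rightEnd ℓ w ≤ ℓ [] := by
  have := (nest_append hpos hdec w []).2
  rwa [List.nil_append, rightEnd_nil] at this

lemma eq_of_mem_same_level {x : ℝ} : ∀ (u v : List Bool), u.length = v.length →
    x ∈ Set.Icc (leftEnd ℓ u) (rightEnd ℓ u) →
    x ∈ Set.Icc (leftEnd ℓ v) (rightEnd ℓ v) → u = v := by
  intro u
  induction u using List.reverseRecOn with
  | nil =>
    intro v hlen _ _
    exact (List.length_eq_zero_iff.mp hlen.symm).symm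
  | append_singleton u a ih =>
    intro v hlen hxu hxv
    rcases List.eq_nil_or_concat v with rfl | ⟨v', b, rfl⟩
    · simp at hlen
    · rw [List.concat_eq_append] at hlen hxv ⊢
      have hlen' : u.length = v'.length := by simpa using hlen
      have hu' : x ∈ Set.Icc (leftEnd ℓ u) (rightEnd ℓ u) := by
        have h := subset_step hpos hdec u a
        exact ⟨le_trans h.1 hxu.1, le_trans hxu.2 h.2⟩
      have hv' : x ∈ Set.Icc (leftEnd ℓ v') (rightEnd ℓ v') := by
        have h := subset_step hpos hdec v' b
        exact ⟨le_trans h.1 hxv.1, le_trans hxv.2 h.2⟩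
      have huv : u = v' := ih v' hlen' hu' hv'
      subst huv
      rcases Bool.eq_false_or_eq_true a with rfl | rfl <;>
        rcases Bool.eq_false_or_eq_true b with rfl | rfl
      · rfl
      · exfalso; linarith [gap_pos hpos hdec u, hxu.1, hxu.2, hxv.1, hxv.2]
      · exfalso; linarith [gap_pos hpos hdec u, hxu.1, hxu.2, hxv.1, hxv.2]
      · rfl
end Geom

section Code
variable {ℓ : List Bool → ℝ}
variable (hpos : ∀ w, 0 < ℓ w) (hdec : ∀ w b, ℓ (w ++ [b]) ≤ 2⁻¹ * 2⁻¹ * ℓ w)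

include hpos hdec

lemma leftEnd_pfx_mono (ω : ℕ → Bool) :
    Monotone (fun n => leftEnd ℓ (pfx ω n)) := by
  apply monotone_nat_of_le_succ
  intro n
  rw [pfx_succ]
  exact (subset_step hpos hdec _ _).1

lemma leftEnd_pfx_bdd (ω : ℕ → Bool) :
    BddAbove (Set.range fun n => leftEnd ℓ (pfx ω n)) := by
  refine ⟨ℓ [], ?_⟩
  rintro y ⟨n, rfl⟩
  have h1 : leftEnd ℓ (pfx ω n) ≤ rightEnd ℓ (pfx ω n) := by
    rw [rightEnd]; linarith [hpos (pfx ω n)]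
  exact le_trans h1 (rightEnd_le_nil hpos hdec _)

lemma codeMapL_tendsto (ω : ℕ → Bool) :
    Filter.Tendsto (fun n => leftEnd ℓ (pfx ω n)) Filter.atTop
      (𝓝 (codeMapL (leftEnd ℓ) ω)) := by
  rw [codeMapL_eq]
  exact tendsto_atTop_ciSup (leftEnd_pfx_mono hpos hdec ω) (leftEnd_pfx_bdd hpos hdec ω)

lemma codeMapL_mem (ω : ℕ → Bool) (n : ℕ) :
    codeMapL (leftEnd ℓ) ω ∈
      Set.Icc (leftEnd ℓ (pfx ω n)) (rightEnd ℓ (pfx ω n)) := by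
  rw [codeMapL_eq]
  constructor
  · exact le_ciSup (leftEnd_pfx_bdd hpos hdec ω) n
  · apply ciSup_le
    intro m
    rcases le_total m n with h | h
    · calc leftEnd ℓ (pfx ω m) ≤ leftEnd ℓ (pfx ω n) := leftEnd_pfx_mono hpos hdec ω h
        _ ≤ rightEnd ℓ (pfx ω n) := by rw [rightEnd]; linarith [hpos (pfx ω n)]
    · obtain ⟨k, rfl⟩ := Nat.exists_eq_add_of_le h
      rw [pfx_add]
      have h1 := nest_append hpos hdec (pfx (fun j => ω (n + j)) k) (pfx ω n)
      calc leftEnd ℓ (pfx ω n ++ _) ≤ rightEnd ℓ (pfx ω n ++ _) := by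
            rw [rightEnd]; linarith [hpos (pfx ω n ++ pfx (fun j => ω (n + j)) k)]
        _ ≤ rightEnd ℓ (pfx ω n) := h1.2

variable (hlim : ∀ ω : ℕ → Bool,
    Filter.Tendsto (fun n => ℓ (pfx ω n)) Filter.atTop (𝓝 0))

include hlim

lemma codeMapL_unique {x : ℝ} (ω : ℕ → Bool)
    (h : ∀ n, x ∈ Set.Icc (leftEnd ℓ (pfx ω n)) (rightEnd ℓ (pfx ω n))) :
    x = codeMapL (leftEnd ℓ) ω := by
  have h1 : Filter.Tendsto (fun n => leftEnd ℓ (pfx ω n)) Filter.atTop (𝓝 x) := by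
    have hlow : Filter.Tendsto (fun n => x - ℓ (pfx ω n)) Filter.atTop (𝓝 (x - 0)) :=
      tendsto_const_nhds.sub (hlim ω)
    rw [sub_zero] at hlow
    apply tendsto_of_tendsto_of_tendsto_of_le_of_le hlow tendsto_const_nhds
    · intro n
      have h2 := (h n).2
      rw [rightEnd] at h2
      show x - ℓ (pfx ω n) ≤ leftEnd ℓ (pfx ω n)
      linarith
    · intro n
      exact (h n).1
  exact tendsto_nhds_unique h1 (codeMapL_tendsto hpos hdec ω)

lemma totality {x : ℝ} (hx : x ∈ Set.Icc (0:ℝ) (ℓ [])) :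
    (∃ v, x ∈ Set.Ioo (rightEnd ℓ (v ++ [false])) (leftEnd ℓ (v ++ [true]))) ∨
      ∃ ω : ℕ → Bool, x = codeMapL (leftEnd ℓ) ω ∧
        ∀ n, x ∈ Set.Icc (leftEnd ℓ (pfx ω n)) (rightEnd ℓ (pfx ω n)) := by
  by_cases hgap : ∃ v, x ∈ Set.Ioo (rightEnd ℓ (v ++ [false])) (leftEnd ℓ (v ++ [true]))
  · exact Or.inl hgap
  push_neg at hgap
  right
  set W : ℕ → List Bool :=
    fun n => Nat.rec [] (fun _ w => w ++ [decide (rightEnd ℓ (w ++ [false]) < x)]) n with hW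
  have hWsucc : ∀ n, W (n + 1) = W n ++ [decide (rightEnd ℓ (W n ++ [false]) < x)] :=
    fun n => rfl
  have hWlen : ∀ n, (W n).length = n := by
    intro n
    induction n with
    | zero => rfl
    | succ n ih => rw [hWsucc]; simp [ih]
  have hmem : ∀ n, x ∈ Set.Icc (leftEnd ℓ (W n)) (rightEnd ℓ (W n)) := by
    intro n
    induction n with
    | zero =>
      have : W 0 = [] := rfl
      rw [this, leftEnd_nil, rightEnd_nil]
      exact hx
    | succ n ih =>
      rw [hWsucc]
      by_cases h : rightEnd ℓ (W n ++ [false]) < x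
      · rw [decide_eq_true h]
        have hng := hgap (W n)
        rw [Set.mem_Ioo] at hng
        push_neg at hng
        constructor
        · exact hng h
        · rw [rightEnd_append_true]; exact ih.2
      · rw [decide_eq_false h]
        push_neg at h
        constructor
        · rw [leftEnd_append_false]; exact ih.1
        · exact h
  set ω : ℕ → Bool := fun n => (W (n + 1)).getD n false with hω
  have hpfx : ∀ n, pfx ω n = W n := by
    intro n
    induction n with
    | zero => rfl
    | succ n ih =>
      rw [pfx_succ, ih, hWsucc]
      congr 1
      have : ω n = (W (n + 1)).getD n false := rfl
      rw [this, hWsucc, List.getD_append_right _ _ _ _ (hWlen n).le]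
      rw [hWlen n]
      simp
  refine ⟨ω, codeMapL_unique hpos hdec hlim ω (fun n => by rw [hpfx]; exact hmem n),
    fun n => by rw [hpfx]; exact hmem n⟩
end Code

section GapLoc
variable {ℓ : List Bool → ℝ}
variable (hpos : ∀ w, 0 < ℓ w) (hdec : ∀ w b, ℓ (w ++ [b]) ≤ 2⁻¹ * 2⁻¹ * ℓ w)
include hpos hdec

lemma mem_of_gap {x : ℝ} {v : List Bool}
    (h : x ∈ Set.Ioo (rightEnd ℓ (v ++ [false])) (leftEnd ℓ (v ++ [true]))) :
    x ∈ Set.Icc (leftEnd ℓ v) (rightEnd ℓ v) := by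
  constructor
  · calc leftEnd ℓ v ≤ leftEnd ℓ (v ++ [false]) := (subset_step hpos hdec v false).1
      _ ≤ rightEnd ℓ (v ++ [false]) := by rw [rightEnd]; linarith [hpos (v ++ [false])]
      _ ≤ x := h.1.le
  · calc x ≤ leftEnd ℓ (v ++ [true]) := h.2.le
      _ ≤ rightEnd ℓ (v ++ [true]) := by rw [rightEnd]; linarith [hpos (v ++ [true])]
      _ = rightEnd ℓ v := rightEnd_append_true v

lemma gap_loc {x : ℝ} {u v : List Bool}
    (hxu : x ∈ Set.Icc (leftEnd ℓ u) (rightEnd ℓ u))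
    (hxg : x ∈ Set.Ioo (rightEnd ℓ (v ++ [false])) (leftEnd ℓ (v ++ [true]))) :
    ∃ s, v = u ++ s := by
  have hxv := mem_of_gap hpos hdec hxg
  rcases le_or_gt u.length v.length with h | h
  · have hsplit : v = v.take u.length ++ v.drop u.length := (List.take_append_drop _ v).symm
    have hxp : x ∈ Set.Icc (leftEnd ℓ (v.take u.length)) (rightEnd ℓ (v.take u.length)) := by
      have h2 := nest_append hpos hdec (v.drop u.length) (v.take u.length)
      rw [← hsplit] at h2
      exact ⟨le_trans h2.1 hxv.1, le_trans hxv.2 h2.2⟩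
    have : u = v.take u.length :=
      eq_of_mem_same_level hpos hdec u _ (by rw [List.length_take]; omega) hxu hxp
    exact ⟨v.drop u.length, by rw [← this] at hsplit; exact hsplit⟩
  · exfalso
    -- v.length < u.length : x would be inside a child of v, contradicting gap membership
    have hq : u.take v.length ++ u.drop v.length = u := List.take_append_drop _ u
    have hxq : x ∈ Set.Icc (leftEnd ℓ (u.take v.length)) (rightEnd ℓ (u.take v.length)) := by
      have h2 := nest_append hpos hdec (u.drop v.length) (u.take v.length)
      rw [hq] at h2
      exact ⟨le_trans h2.1 hxu.1, le_trans hxu.2 h2.2⟩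
    have hveq : v = u.take v.length :=
      eq_of_mem_same_level hpos hdec v _ (by rw [List.length_take]; omega) hxv hxq
    have hgetElem : u[v.length]? = some (u[v.length]'h) := List.getElem?_eq_getElem h
    have hp : u.take (v.length + 1) = v ++ [u[v.length]'h] := by
      rw [List.take_succ, hgetElem, ← hveq]
      rfl
    have hxp : x ∈ Set.Icc (leftEnd ℓ (u.take (v.length + 1)))
        (rightEnd ℓ (u.take (v.length + 1))) := by
      have hq2 : u.take (v.length + 1) ++ u.drop (v.length + 1) = u := List.take_append_drop _ u
      have h2 := nest_append hpos hdec (u.drop (v.length + 1)) (u.take (v.length + 1))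
      rw [hq2] at h2
      exact ⟨le_trans h2.1 hxu.1, le_trans hxu.2 h2.2⟩
    rw [hp] at hxp
    rcases Bool.eq_false_or_eq_true (u[v.length]'h) with hb | hb <;> rw [hb] at hxp
    all_goals first
      | exact absurd hxp.2 (not_le.mpr hxg.1)
      | exact absurd hxp.1 (not_le.mpr hxg.2)
end GapLoc

lemma pfx_seqOf_le {w : List Bool} {n : ℕ} (b : Bool) (h : n ≤ w.length) :
    pfx (seqOf w b) n = w.take n := by
  apply List.ext_getElem
  · rw [pfx_length, List.length_take]; omega
  · intro j h1 h2
    simp only [pfx, List.getElem_ofFn]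
    show w.getD j b = _
    rw [List.getD_eq_getElem w b (by rw [pfx_length] at h1; omega)]
    simp [List.getElem_take]

lemma pfx_seqOf_ge (w : List Bool) (b : Bool) (k : ℕ) :
    pfx (seqOf w b) (w.length + k) = w ++ List.replicate k b := by
  induction k with
  | zero => simpa using pfx_seqOf_le b (le_refl w.length)
  | succ k ih =>
    rw [← Nat.add_assoc, pfx_succ, ih, List.replicate_succ', ← List.append_assoc]
    congr 2
    show (seqOf w b) (w.length + k) = b
    exact List.getD_eq_default _ _ (by omega)

section Repl
variable {ℓ : List Bool → ℝ}

lemma leftEnd_repl_false (w : List Bool) (k : ℕ) :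
    leftEnd ℓ (w ++ List.replicate k false) = leftEnd ℓ w := by
  induction k with
  | zero => simp
  | succ k ih => rw [List.replicate_succ', ← List.append_assoc, leftEnd_append_false, ih]

lemma leftEnd_repl_true (w : List Bool) (k : ℕ) :
    leftEnd ℓ (w ++ List.replicate k true) =
      rightEnd ℓ w - ℓ (w ++ List.replicate k true) := by
  induction k with
  | zero => simp [rightEnd]
  | succ k ih =>
    rw [List.replicate_succ', ← List.append_assoc, leftEnd_append_true, ih]
    ring
end Repl

section Code2
variable {ℓ : List Bool → ℝ}
variable (hpos : ∀ w, 0 < ℓ w) (hdec : ∀ w b, ℓ (w ++ [b]) ≤ 2⁻¹ * 2⁻¹ * ℓ w)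
variable (hlim : ∀ ω : ℕ → Bool,
    Filter.Tendsto (fun n => ℓ (pfx ω n)) Filter.atTop (𝓝 0))
include hpos hdec

lemma codeMapL_seqOf_false (w : List Bool) :
    codeMapL (leftEnd ℓ) (seqOf w false) = leftEnd ℓ w := by
  have h1 := codeMapL_tendsto hpos hdec (seqOf w false)
  have h3 : Filter.Tendsto (fun n => leftEnd ℓ (pfx (seqOf w false) n)) Filter.atTop
      (𝓝 (leftEnd ℓ w)) := by
    apply Filter.Tendsto.congr' _ tendsto_const_nhds
    filter_upwards [Filter.eventually_ge_atTop w.length] with n hn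
    obtain ⟨k, rfl⟩ := Nat.exists_eq_add_of_le hn
    rw [pfx_seqOf_ge, leftEnd_repl_false]
  exact tendsto_nhds_unique h1 h3

include hlim in
lemma codeMapL_seqOf_true (w : List Bool) :
    codeMapL (leftEnd ℓ) (seqOf w true) = rightEnd ℓ w := by
  have h1 := codeMapL_tendsto hpos hdec (seqOf w true)
  have h3 : Filter.Tendsto (fun n => leftEnd ℓ (pfx (seqOf w true) n)) Filter.atTop
      (𝓝 (rightEnd ℓ w)) := by
    have h4 : Filter.Tendsto (fun n => rightEnd ℓ w - ℓ (pfx (seqOf w true) n))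
        Filter.atTop (𝓝 (rightEnd ℓ w - 0)) := tendsto_const_nhds.sub (hlim _)
    rw [sub_zero] at h4
    apply Filter.Tendsto.congr' _ h4
    filter_upwards [Filter.eventually_ge_atTop w.length] with n hn
    obtain ⟨k, rfl⟩ := Nat.exists_eq_add_of_le hn
    rw [pfx_seqOf_ge, leftEnd_repl_true]
  exact tendsto_nhds_unique h1 h3
end Code2

lemma consSeq_seqOf (i : Bool) (w : List Bool) (b : Bool) :
    consSeq i (seqOf w b) = seqOf (i :: w) b := by
  funext n
  cases n with
  | zero => rfl
  | succ n => simp [consSeq, seqOf]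

lemma consSeq_eta (ω : ℕ → Bool) : consSeq (ω 0) (fun n => ω (n + 1)) = ω := by
  funext n
  cases n with
  | zero => rfl
  | succ n => simp [consSeq]

lemma pfx_consSeq (i : Bool) (ω : ℕ → Bool) (n : ℕ) :
    pfx (consSeq i ω) (n + 1) = i :: pfx ω n := by
  show List.ofFn _ = _
  rw [List.ofFn_succ]
  simp [consSeq, pfx]

section Ell
variable {β M : ℝ} (hβ : β ∈ Set.Ioo (0:ℝ) 1) (hM : (100:ℝ) ≤ M)

include hβ hM

lemma hMpos : (0:ℝ) < M := lt_of_lt_of_le (by norm_num) hM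

lemma ellpos : ∀ w, 0 < ellBM β M w := fun w => ellBM_pos (hMpos hβ hM) w

lemma elldec : ∀ (w : List Bool) (b : Bool),
    ellBM β M (w ++ [b]) ≤ 2⁻¹ * 2⁻¹ * ellBM β M w := by
  intro w b
  have h1 := ellBM_append_le hβ.1 hβ.2 (hMpos hβ hM) b w
  have h2 := ellpos hβ hM w
  have h3 : 2 / M ≤ 2⁻¹ * 2⁻¹ := by
    rw [div_le_iff₀ (hMpos hβ hM)]
    nlinarith
  nlinarith

lemma ell_pfx_le (ω : ℕ → Bool) (n : ℕ) :
    ellBM β M (pfx ω n) ≤ (4⁻¹:ℝ) ^ n := by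
  induction n with
  | zero => rw [pfx_zero, ellBM_nil]; norm_num
  | succ n ih =>
    rw [pfx_succ]
    calc ellBM β M (pfx ω n ++ [ω n]) ≤ 2⁻¹ * 2⁻¹ * ellBM β M (pfx ω n) :=
          elldec hβ hM _ _
      _ ≤ 2⁻¹ * 2⁻¹ * (4⁻¹:ℝ) ^ n := by nlinarith [ellpos hβ hM (pfx ω n)]
      _ = (4⁻¹:ℝ) ^ (n + 1) := by rw [pow_succ]; ring

lemma elllim : ∀ ω : ℕ → Bool,
    Filter.Tendsto (fun n => ellBM β M (pfx ω n)) Filter.atTop (𝓝 0) := by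
  intro ω
  apply squeeze_zero (fun n => (ellpos hβ hM _).le) (ell_pfx_le hβ hM ω)
  exact tendsto_pow_atTop_nhds_zero_of_lt_one (by norm_num) (by norm_num)

lemma ell_le_pow (w : List Bool) : ellBM β M w ≤ (4⁻¹:ℝ) ^ w.length := by
  induction w using List.reverseRecOn with
  | nil => rw [ellBM_nil]; norm_num
  | append_singleton u b ih =>
    calc ellBM β M (u ++ [b]) ≤ 2⁻¹ * 2⁻¹ * ellBM β M u := elldec hβ hM _ _
      _ ≤ 2⁻¹ * 2⁻¹ * (4⁻¹:ℝ) ^ u.length := by nlinarith [ellpos hβ hM u]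
      _ = (4⁻¹:ℝ) ^ (u ++ [b]).length := by
          simp only [List.length_append, List.length_cons, List.length_nil]
          rw [pow_succ]; ring

/-- elementary comparison: quantities comparable to `ℓ` scale with ratio in
`[1/(5M), 3/M]` when a symbol is prepended. -/
lemma elem_bounds (X : List Bool → ℝ)
    (hX : ∀ w, (1 - 4 * (1/M)) * ellBM β M w ≤ X w ∧ X w ≤ ellBM β M w)
    (i : Bool) (w : List Bool) :
    1 / (5 * M) * X w ≤ X (i :: w) ∧ X (i :: w) ≤ 3 / M * X w := by
  have hM0 := hMpos hβ hM
  set u := 1 / M with hu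
  have hu0 : 0 < u := by positivity
  have hu100 : u ≤ 1 / 100 := by
    rw [hu, div_le_div_iff₀ hM0 (by norm_num)]
    linarith
  obtain ⟨hc1, hc2⟩ := ellBM_cons_bounds hβ.1 hβ.2 hM0 i w
  have hc1' : u / 4 * ellBM β M w ≤ ellBM β M (i :: w) := by
    rw [show u / 4 = 1 / (4 * M) by rw [hu]; field_simp]
    exact hc1
  have hc2' : ellBM β M (i :: w) ≤ 2 * u * ellBM β M w := by
    rw [show 2 * u = 2 / M by rw [hu]; ring1]
    exact hc2
  have hA : 1 / (5 * M) = u / 5 := by rw [hu]; field_simp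
  have hB : 3 / M = 3 * u := by rw [hu]; ring1
  obtain ⟨hXl, hXu⟩ := hX w
  obtain ⟨hXl', hXu'⟩ := hX (i :: w)
  have hlw := ellpos hβ hM w
  have hlw' := ellpos hβ hM (i :: w)
  rw [hA, hB]
  constructor
  · nlinarith
  · nlinarith

/-- gap/step quantities -/
lemma gfun_bounds (w : List Bool) :
    (1 - 4 * (1/M)) * ellBM β M w ≤
        ellBM β M w - ellBM β M (w ++ [false]) - ellBM β M (w ++ [true]) ∧
      ellBM β M w - ellBM β M (w ++ [false]) - ellBM β M (w ++ [true]) ≤ ellBM β M w := by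
  have hM0 := hMpos hβ hM
  have h1 := ellBM_append_le hβ.1 hβ.2 hM0 false w
  have h2 := ellBM_append_le hβ.1 hβ.2 hM0 true w
  have h3 := ellpos hβ hM (w ++ [false])
  have h4 := ellpos hβ hM (w ++ [true])
  have h5 := ellpos hβ hM w
  have h6 : 2 / M * ellBM β M w = 2 * (1/M) * ellBM β M w := by ring
  constructor
  · nlinarith
  · nlinarith

lemma dfun_bounds (b : Bool) (w : List Bool) :
    (1 - 4 * (1/M)) * ellBM β M w ≤ ellBM β M w - ellBM β M (w ++ [b]) ∧
      ellBM β M w - ellBM β M (w ++ [b]) ≤ ellBM β M w := by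
  have hM0 := hMpos hβ hM
  have h1 := ellBM_append_le hβ.1 hβ.2 hM0 b w
  have h3 := ellpos hβ hM (w ++ [b])
  have h5 := ellpos hβ hM w
  have h6 : 2 / M * ellBM β M w = 2 * (1/M) * ellBM β M w := by ring
  constructor
  · nlinarith
  · nlinarith
end Ell

noncomputable def gslope (β M : ℝ) (i : Bool) (v : List Bool) : ℝ :=
  (leftEnd (ellBM β M) ((i :: v) ++ [true]) - rightEnd (ellBM β M) ((i :: v) ++ [false])) /
    (leftEnd (ellBM β M) (v ++ [true]) - rightEnd (ellBM β M) (v ++ [false]))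

section Main
variable {β M : ℝ} {φ : Bool → ℝ → ℝ}
variable (hβ : β ∈ Set.Ioo (0:ℝ) 1) (hM : (100:ℝ) ≤ M)
variable (hφgap : ∀ (i : Bool) (w : List Bool),
      ∀ x ∈ Set.Ioo (rightEnd (ellBM β M) (w ++ [false])) (leftEnd (ellBM β M) (w ++ [true])),
        φ i x =
          (leftEnd (ellBM β M) ((i :: w) ++ [true]) -
              rightEnd (ellBM β M) ((i :: w) ++ [false])) /
              (leftEnd (ellBM β M) (w ++ [true]) - rightEnd (ellBM β M) (w ++ [false])) *
              (x - rightEnd (ellBM β M) (w ++ [false])) +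
            rightEnd (ellBM β M) ((i :: w) ++ [false]))
variable (hφcode : ∀ (i : Bool) (ω : ℕ → Bool),
      φ i (codeMapL (leftEnd (ellBM β M)) ω) = codeMapL (leftEnd (ellBM β M)) (consSeq i ω))

include hβ hM

include hφcode in
lemma phi_leftEnd (i : Bool) (u : List Bool) :
    φ i (leftEnd (ellBM β M) u) = leftEnd (ellBM β M) (i :: u) := by
  have h1 := codeMapL_seqOf_false (ellpos hβ hM) (elldec hβ hM) u
  rw [← h1, hφcode, consSeq_seqOf,
    codeMapL_seqOf_false (ellpos hβ hM) (elldec hβ hM)]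

include hφcode in
lemma phi_rightEnd (i : Bool) (u : List Bool) :
    φ i (rightEnd (ellBM β M) u) = rightEnd (ellBM β M) (i :: u) := by
  have h1 := codeMapL_seqOf_true (ellpos hβ hM) (elldec hβ hM) (elllim hβ hM) u
  rw [← h1, hφcode, consSeq_seqOf,
    codeMapL_seqOf_true (ellpos hβ hM) (elldec hβ hM) (elllim hβ hM)]

include hφgap hφcode in
lemma phi_gap (i : Bool) (v : List Bool) {x : ℝ}
    (hx : x ∈ Set.Icc (rightEnd (ellBM β M) (v ++ [false]))
      (leftEnd (ellBM β M) (v ++ [true]))) :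
    φ i x = gslope β M i v * (x - rightEnd (ellBM β M) (v ++ [false])) +
      rightEnd (ellBM β M) ((i :: v) ++ [false]) := by
  rcases eq_or_lt_of_le hx.1 with heq | hlt1
  · rw [← heq, phi_rightEnd hβ hM hφcode]
    have : i :: (v ++ [false]) = (i :: v) ++ [false] := rfl
    rw [this]; ring
  rcases eq_or_lt_of_le hx.2 with heq2 | hlt2
  · rw [heq2, phi_leftEnd hβ hM hφcode]
    have hne : leftEnd (ellBM β M) (v ++ [true]) - rightEnd (ellBM β M) (v ++ [false]) ≠ 0 :=
      ne_of_gt (by linarith [gap_pos (ellpos hβ hM) (elldec hβ hM) v])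
    have : i :: (v ++ [true]) = (i :: v) ++ [true] := rfl
    rw [this, gslope, div_mul_cancel₀ _ hne]
    ring
  · exact hφgap i v x ⟨hlt1, hlt2⟩

include hφgap hφcode in
lemma phi_gap_diff (i : Bool) (v : List Bool) {x y : ℝ}
    (hx : x ∈ Set.Icc (rightEnd (ellBM β M) (v ++ [false]))
      (leftEnd (ellBM β M) (v ++ [true])))
    (hy : y ∈ Set.Icc (rightEnd (ellBM β M) (v ++ [false]))
      (leftEnd (ellBM β M) (v ++ [true]))) :
    φ i x - φ i y = gslope β M i v * (x - y) := by
  rw [phi_gap hβ hM hφgap hφcode i v hx, phi_gap hβ hM hφgap hφcode i v hy]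
  ring

lemma gslope_bounds (i : Bool) (v : List Bool) :
    1 / (5 * M) ≤ gslope β M i v ∧ gslope β M i v ≤ 3 / M := by
  have hXb := elem_bounds hβ hM
    (fun w => ellBM β M w - ellBM β M (w ++ [false]) - ellBM β M (w ++ [true]))
    (fun w => gfun_bounds hβ hM w) i v
  have hnum : leftEnd (ellBM β M) ((i :: v) ++ [true]) -
      rightEnd (ellBM β M) ((i :: v) ++ [false]) =
      ellBM β M (i :: v) - ellBM β M ((i :: v) ++ [false]) - ellBM β M ((i :: v) ++ [true]) :=
    gap_eq (i :: v)
  have hden : leftEnd (ellBM β M) (v ++ [true]) - rightEnd (ellBM β M) (v ++ [false]) =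
      ellBM β M v - ellBM β M (v ++ [false]) - ellBM β M (v ++ [true]) := gap_eq v
  have hdpos : 0 < ellBM β M v - ellBM β M (v ++ [false]) - ellBM β M (v ++ [true]) := by
    have h1 := (gfun_bounds hβ hM v).1
    have h2 := ellpos hβ hM v
    have hM0 := hMpos hβ hM
    have : (0:ℝ) < 1 - 4 * (1/M) := by
      have : 4 * (1/M) ≤ 4 * (1/100) := by
        apply mul_le_mul_of_nonneg_left _ (by norm_num)
        rw [div_le_div_iff₀ hM0 (by norm_num)]; linarith
      linarith
    nlinarith
  rw [gslope, hnum, hden]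
  constructor
  · rw [le_div_iff₀ hdpos]; exact hXb.1
  · rw [div_le_iff₀ hdpos]; exact hXb.2

omit hβ hM in
lemma nat_shift_tendsto (n₀ : ℕ) : Filter.Tendsto (fun k : ℕ => n₀ + k) Filter.atTop Filter.atTop :=
  tendsto_atTop_atTop_of_monotone (fun a b h => by omega) (fun b => ⟨b, by omega⟩)

lemma rightEnd_pfx_tendsto (ω : ℕ → Bool) :
    Filter.Tendsto (fun m => rightEnd (ellBM β M) (pfx ω m)) Filter.atTop
      (𝓝 (codeMapL (leftEnd (ellBM β M)) ω)) := by
  have h1 := (codeMapL_tendsto (ellpos hβ hM) (elldec hβ hM) ω).add (elllim hβ hM ω)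
  rw [add_zero] at h1
  exact h1

lemma spineR (i : Bool) (ω : ℕ → Bool) (n₀ : ℕ) :
    1 / (5 * M) * (rightEnd (ellBM β M) (pfx ω n₀) - codeMapL (leftEnd (ellBM β M)) ω) ≤
        rightEnd (ellBM β M) (i :: pfx ω n₀) -
          codeMapL (leftEnd (ellBM β M)) (consSeq i ω) ∧
      rightEnd (ellBM β M) (i :: pfx ω n₀) - codeMapL (leftEnd (ellBM β M)) (consSeq i ω) ≤
        3 / M * (rightEnd (ellBM β M) (pfx ω n₀) - codeMapL (leftEnd (ellBM β M)) ω) := by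
  set R : ℕ → ℝ := fun k => rightEnd (ellBM β M) (pfx ω (n₀ + k)) with hR
  set R' : ℕ → ℝ := fun k => rightEnd (ellBM β M) (i :: pfx ω (n₀ + k)) with hR'
  have step : ∀ k, 1 / (5 * M) * (R k - R (k + 1)) ≤ R' k - R' (k + 1) ∧
      R' k - R' (k + 1) ≤ 3 / M * (R k - R (k + 1)) := by
    intro k
    have hp : pfx ω (n₀ + (k + 1)) = pfx ω (n₀ + k) ++ [ω (n₀ + k)] := by
      rw [← Nat.add_assoc]; exact pfx_succ ω (n₀ + k)
    have hRk : R (k + 1) = rightEnd (ellBM β M) (pfx ω (n₀ + k) ++ [ω (n₀ + k)]) := by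
      rw [hR]; simp only []; rw [hp]
    have hR'k : R' (k + 1) = rightEnd (ellBM β M) ((i :: pfx ω (n₀ + k)) ++ [ω (n₀ + k)]) := by
      rw [hR']; simp only []; rw [hp]; rfl
    set v := pfx ω (n₀ + k)
    cases hb : ω (n₀ + k)
    · -- false
      rw [hb] at hRk hR'k
      have hRkk : R k = rightEnd (ellBM β M) v := rfl
      have e1 : R k - R (k + 1) = ellBM β M v - ellBM β M (v ++ [false]) := by
        rw [hRkk, hRk, rightEnd_append_false, rightEnd]; ring
      have hR'kk : R' k = rightEnd (ellBM β M) (i :: v) := rfl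
      have e2 : R' k - R' (k + 1) =
          ellBM β M (i :: v) - ellBM β M ((i :: v) ++ [false]) := by
        have hc : i :: v ++ [false] = (i :: v) ++ [false] := rfl
        rw [hR'kk, hR'k, hc, rightEnd_append_false, rightEnd]; ring
      have hX := elem_bounds hβ hM (fun w => ellBM β M w - ellBM β M (w ++ [false]))
        (fun w => dfun_bounds hβ hM false w) i v
      rw [e1, e2]
      exact hX
    · -- true
      rw [hb] at hRk hR'k
      have hRkk : R k = rightEnd (ellBM β M) v := rfl
      have e1 : R k - R (k + 1) = 0 := by
        rw [hRkk, hRk, rightEnd_append_true]; ring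
      have hR'kk : R' k = rightEnd (ellBM β M) (i :: v) := rfl
      have e2 : R' k - R' (k + 1) = 0 := by
        have hc : i :: v ++ [true] = (i :: v) ++ [true] := rfl
        rw [hR'kk, hR'k, hc, rightEnd_append_true]; ring
      rw [e1, e2]
      norm_num
  have psum : ∀ K, 1 / (5 * M) * (R 0 - R K) ≤ R' 0 - R' K ∧
      R' 0 - R' K ≤ 3 / M * (R 0 - R K) := by
    intro K
    induction K with
    | zero => simp
    | succ K ih =>
      obtain ⟨s1, s2⟩ := step K
      constructor
      · have e : 1 / (5 * M) * (R 0 - R (K + 1)) =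
            1 / (5 * M) * (R 0 - R K) + 1 / (5 * M) * (R K - R (K + 1)) := by ring
        linarith [ih.1]
      · have e : 3 / M * (R 0 - R (K + 1)) =
            3 / M * (R 0 - R K) + 3 / M * (R K - R (K + 1)) := by ring
        linarith [ih.2]
  have hRtend : Filter.Tendsto R Filter.atTop (𝓝 (codeMapL (leftEnd (ellBM β M)) ω)) :=
    (rightEnd_pfx_tendsto hβ hM ω).comp (nat_shift_tendsto n₀)
  have hR'tend : Filter.Tendsto R' Filter.atTop
      (𝓝 (codeMapL (leftEnd (ellBM β M)) (consSeq i ω))) := by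
    have h1 := (rightEnd_pfx_tendsto hβ hM (consSeq i ω)).comp (nat_shift_tendsto (n₀ + 1))
    apply Filter.Tendsto.congr _ h1
    intro k
    show rightEnd (ellBM β M) (pfx (consSeq i ω) (n₀ + 1 + k)) = R' k
    rw [hR']
    have : n₀ + 1 + k = (n₀ + k) + 1 := by omega
    rw [this, pfx_consSeq]
  have hR0 : R 0 = rightEnd (ellBM β M) (pfx ω n₀) := rfl
  have hR'0 : R' 0 = rightEnd (ellBM β M) (i :: pfx ω n₀) := rfl
  constructor
  · have t1 : Filter.Tendsto (fun K => 1 / (5 * M) * (R 0 - R K)) Filter.atTop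
        (𝓝 (1 / (5 * M) * (R 0 - codeMapL (leftEnd (ellBM β M)) ω))) :=
      (tendsto_const_nhds.sub hRtend).const_mul _
    have t2 : Filter.Tendsto (fun K => R' 0 - R' K) Filter.atTop
        (𝓝 (R' 0 - codeMapL (leftEnd (ellBM β M)) (consSeq i ω))) :=
      tendsto_const_nhds.sub hR'tend
    have := le_of_tendsto_of_tendsto' t1 t2 (fun K => (psum K).1)
    rwa [hR0, hR'0] at this
  · have t1 : Filter.Tendsto (fun K => 3 / M * (R 0 - R K)) Filter.atTop
        (𝓝 (3 / M * (R 0 - codeMapL (leftEnd (ellBM β M)) ω))) :=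
      (tendsto_const_nhds.sub hRtend).const_mul _
    have t2 : Filter.Tendsto (fun K => R' 0 - R' K) Filter.atTop
        (𝓝 (R' 0 - codeMapL (leftEnd (ellBM β M)) (consSeq i ω))) :=
      tendsto_const_nhds.sub hR'tend
    have := le_of_tendsto_of_tendsto' t2 t1 (fun K => (psum K).2)
    rwa [hR0, hR'0] at this

lemma spineL (i : Bool) (ω : ℕ → Bool) (n₀ : ℕ) :
    1 / (5 * M) * (codeMapL (leftEnd (ellBM β M)) ω - leftEnd (ellBM β M) (pfx ω n₀)) ≤
        codeMapL (leftEnd (ellBM β M)) (consSeq i ω) -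
          leftEnd (ellBM β M) (i :: pfx ω n₀) ∧
      codeMapL (leftEnd (ellBM β M)) (consSeq i ω) - leftEnd (ellBM β M) (i :: pfx ω n₀) ≤
        3 / M * (codeMapL (leftEnd (ellBM β M)) ω - leftEnd (ellBM β M) (pfx ω n₀)) := by
  set R : ℕ → ℝ := fun k => leftEnd (ellBM β M) (pfx ω (n₀ + k)) with hR
  set R' : ℕ → ℝ := fun k => leftEnd (ellBM β M) (i :: pfx ω (n₀ + k)) with hR'
  have step : ∀ k, 1 / (5 * M) * (R (k + 1) - R k) ≤ R' (k + 1) - R' k ∧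
      R' (k + 1) - R' k ≤ 3 / M * (R (k + 1) - R k) := by
    intro k
    have hp : pfx ω (n₀ + (k + 1)) = pfx ω (n₀ + k) ++ [ω (n₀ + k)] := by
      rw [← Nat.add_assoc]; exact pfx_succ ω (n₀ + k)
    have hRk : R (k + 1) = leftEnd (ellBM β M) (pfx ω (n₀ + k) ++ [ω (n₀ + k)]) := by
      rw [hR]; simp only []; rw [hp]
    have hR'k : R' (k + 1) = leftEnd (ellBM β M) ((i :: pfx ω (n₀ + k)) ++ [ω (n₀ + k)]) := by
      rw [hR']; simp only []; rw [hp]; rfl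
    set v := pfx ω (n₀ + k)
    cases hb : ω (n₀ + k)
    · -- false : no movement
      rw [hb] at hRk hR'k
      have hRkk : R k = leftEnd (ellBM β M) v := rfl
      have e1 : R (k + 1) - R k = 0 := by
        rw [hRkk, hRk, leftEnd_append_false]; ring
      have hR'kk : R' k = leftEnd (ellBM β M) (i :: v) := rfl
      have e2 : R' (k + 1) - R' k = 0 := by
        have hc : i :: v ++ [false] = (i :: v) ++ [false] := rfl
        rw [hR'kk, hR'k, hc, leftEnd_append_false]; ring
      rw [e1, e2]
      norm_num
    · -- true
      rw [hb] at hRk hR'k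
      have hRkk : R k = leftEnd (ellBM β M) v := rfl
      have e1 : R (k + 1) - R k = ellBM β M v - ellBM β M (v ++ [true]) := by
        rw [hRkk, hRk, leftEnd_append_true]; ring
      have hR'kk : R' k = leftEnd (ellBM β M) (i :: v) := rfl
      have e2 : R' (k + 1) - R' k =
          ellBM β M (i :: v) - ellBM β M ((i :: v) ++ [true]) := by
        have hc : i :: v ++ [true] = (i :: v) ++ [true] := rfl
        rw [hR'kk, hR'k, hc, leftEnd_append_true]; ring
      have hX := elem_bounds hβ hM (fun w => ellBM β M w - ellBM β M (w ++ [true]))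
        (fun w => dfun_bounds hβ hM true w) i v
      rw [e1, e2]
      exact hX
  have psum : ∀ K, 1 / (5 * M) * (R K - R 0) ≤ R' K - R' 0 ∧
      R' K - R' 0 ≤ 3 / M * (R K - R 0) := by
    intro K
    induction K with
    | zero => simp
    | succ K ih =>
      obtain ⟨s1, s2⟩ := step K
      constructor
      · have e : 1 / (5 * M) * (R (K + 1) - R 0) =
            1 / (5 * M) * (R K - R 0) + 1 / (5 * M) * (R (K + 1) - R K) := by ring
        linarith [ih.1]
      · have e : 3 / M * (R (K + 1) - R 0) =
            3 / M * (R K - R 0) + 3 / M * (R (K + 1) - R K) := by ring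
        linarith [ih.2]
  have hRtend : Filter.Tendsto R Filter.atTop (𝓝 (codeMapL (leftEnd (ellBM β M)) ω)) :=
    (codeMapL_tendsto (ellpos hβ hM) (elldec hβ hM) ω).comp (nat_shift_tendsto n₀)
  have hR'tend : Filter.Tendsto R' Filter.atTop
      (𝓝 (codeMapL (leftEnd (ellBM β M)) (consSeq i ω))) := by
    have h1 := (codeMapL_tendsto (ellpos hβ hM) (elldec hβ hM) (consSeq i ω)).comp
      (nat_shift_tendsto (n₀ + 1))
    apply Filter.Tendsto.congr _ h1
    intro k
    show leftEnd (ellBM β M) (pfx (consSeq i ω) (n₀ + 1 + k)) = R' k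
    rw [hR']
    have : n₀ + 1 + k = (n₀ + k) + 1 := by omega
    rw [this, pfx_consSeq]
  have hR0 : R 0 = leftEnd (ellBM β M) (pfx ω n₀) := rfl
  have hR'0 : R' 0 = leftEnd (ellBM β M) (i :: pfx ω n₀) := rfl
  constructor
  · have t1 : Filter.Tendsto (fun K => 1 / (5 * M) * (R K - R 0)) Filter.atTop
        (𝓝 (1 / (5 * M) * (codeMapL (leftEnd (ellBM β M)) ω - R 0))) :=
      (hRtend.sub tendsto_const_nhds).const_mul _
    have t2 : Filter.Tendsto (fun K => R' K - R' 0) Filter.atTop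
        (𝓝 (codeMapL (leftEnd (ellBM β M)) (consSeq i ω) - R' 0)) :=
      hR'tend.sub tendsto_const_nhds
    have := le_of_tendsto_of_tendsto' t1 t2 (fun K => (psum K).1)
    rwa [hR0, hR'0] at this
  · have t1 : Filter.Tendsto (fun K => 3 / M * (R K - R 0)) Filter.atTop
        (𝓝 (3 / M * (codeMapL (leftEnd (ellBM β M)) ω - R 0))) :=
      (hRtend.sub tendsto_const_nhds).const_mul _
    have t2 : Filter.Tendsto (fun K => R' K - R' 0) Filter.atTop
        (𝓝 (codeMapL (leftEnd (ellBM β M)) (consSeq i ω) - R' 0)) :=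
      hR'tend.sub tendsto_const_nhds
    have := le_of_tendsto_of_tendsto' t2 t1 (fun K => (psum K).2)
    rwa [hR0, hR'0] at this

include hφgap hφcode in
lemma right_cmp (i : Bool) (u : List Bool) {x : ℝ} (hx01 : x ∈ Set.Icc (0:ℝ) 1)
    (hxu : x ∈ Set.Icc (leftEnd (ellBM β M) u) (rightEnd (ellBM β M) u)) :
    1 / (5 * M) * (rightEnd (ellBM β M) u - x) ≤ φ i (rightEnd (ellBM β M) u) - φ i x ∧
      φ i (rightEnd (ellBM β M) u) - φ i x ≤ 3 / M * (rightEnd (ellBM β M) u - x) := by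
  have hpos := ellpos hβ hM
  have hdec := elldec hβ hM
  have hlim := elllim hβ hM
  have hx1 : x ∈ Set.Icc (0:ℝ) (ellBM β M []) := by rw [ellBM_nil]; exact hx01
  rcases totality hpos hdec hlim hx1 with ⟨v, hgapmem⟩ | ⟨ω, hxeq, hmem⟩
  · -- gap case
    obtain ⟨s, rfl⟩ : ∃ s, v = u ++ s := gap_loc hpos hdec hxu hgapmem
    set l₁ := leftEnd (ellBM β M) ((u ++ s) ++ [true]) with hl₁
    have hl₁code : codeMapL (leftEnd (ellBM β M)) (seqOf ((u ++ s) ++ [true]) false) = l₁ :=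
      codeMapL_seqOf_false hpos hdec _
    have hpu : pfx (seqOf ((u ++ s) ++ [true]) false) u.length = u := by
      rw [pfx_seqOf_le false (by simp)]
      rw [List.append_assoc]
      exact List.take_left
    have hsp := spineR hβ hM i (seqOf ((u ++ s) ++ [true]) false) u.length
    rw [hpu, hl₁code] at hsp
    have hφl₁ : φ i l₁ =
        codeMapL (leftEnd (ellBM β M)) (consSeq i (seqOf ((u ++ s) ++ [true]) false)) := by
      rw [← hl₁code, hφcode]
    have hgd := phi_gap_diff hβ hM hφgap hφcode i (u ++ s)
      (x := l₁) (y := x) ⟨(gap_pos hpos hdec _).le, le_refl _⟩ ⟨hgapmem.1.le, hgapmem.2.le⟩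
    have hsl := gslope_bounds hβ hM i (u ++ s)
    have hxle : x ≤ l₁ := hgapmem.2.le
    have hl₁le : l₁ ≤ rightEnd (ellBM β M) u := by
      have h2 := nest_append hpos hdec (s ++ [true]) u
      have h3 : l₁ ≤ rightEnd (ellBM β M) ((u ++ s) ++ [true]) := by
        rw [rightEnd]; linarith [hpos ((u ++ s) ++ [true])]
      rw [List.append_assoc]  at h3
      linarith [h2.2, h3]
    have hr := phi_rightEnd hβ hM hφcode i u
    have e : φ i (rightEnd (ellBM β M) u) - φ i x =
        (rightEnd (ellBM β M) (i :: u) -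
          codeMapL (leftEnd (ellBM β M)) (consSeq i (seqOf ((u ++ s) ++ [true]) false))) +
          (φ i l₁ - φ i x) := by
      rw [hr, hφl₁]; ring
    constructor
    · have b1 : 1 / (5 * M) * (l₁ - x) ≤ φ i l₁ - φ i x := by
        rw [hgd]
        exact mul_le_mul_of_nonneg_right hsl.1 (by linarith)
      have e2 : 1 / (5 * M) * (rightEnd (ellBM β M) u - x) =
          1 / (5 * M) * (rightEnd (ellBM β M) u - l₁) + 1 / (5 * M) * (l₁ - x) := by ring
      linarith [hsp.1]
    · have b1 : φ i l₁ - φ i x ≤ 3 / M * (l₁ - x) := by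
        rw [hgd]
        exact mul_le_mul_of_nonneg_right hsl.2 (by linarith)
      have e2 : 3 / M * (rightEnd (ellBM β M) u - x) =
          3 / M * (rightEnd (ellBM β M) u - l₁) + 3 / M * (l₁ - x) := by ring
      linarith [hsp.2]
  · -- coding case
    have hpu : pfx ω u.length = u :=
      eq_of_mem_same_level hpos hdec _ _ (pfx_length ω u.length)
        (hxeq ▸ hmem u.length) hxu
    have h1 := spineR hβ hM i ω u.length
    rw [hpu] at h1
    rw [hxeq, hφcode i ω, phi_rightEnd hβ hM hφcode i u]
    exact h1

include hφgap hφcode in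
lemma left_cmp (i : Bool) (u : List Bool) {x : ℝ} (hx01 : x ∈ Set.Icc (0:ℝ) 1)
    (hxu : x ∈ Set.Icc (leftEnd (ellBM β M) u) (rightEnd (ellBM β M) u)) :
    1 / (5 * M) * (x - leftEnd (ellBM β M) u) ≤ φ i x - φ i (leftEnd (ellBM β M) u) ∧
      φ i x - φ i (leftEnd (ellBM β M) u) ≤ 3 / M * (x - leftEnd (ellBM β M) u) := by
  have hpos := ellpos hβ hM
  have hdec := elldec hβ hM
  have hlim := elllim hβ hM
  have hx1 : x ∈ Set.Icc (0:ℝ) (ellBM β M []) := by rw [ellBM_nil]; exact hx01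
  rcases totality hpos hdec hlim hx1 with ⟨v, hgapmem⟩ | ⟨ω, hxeq, hmem⟩
  · -- gap case
    obtain ⟨s, rfl⟩ : ∃ s, v = u ++ s := gap_loc hpos hdec hxu hgapmem
    set r₀ := rightEnd (ellBM β M) ((u ++ s) ++ [false]) with hr₀
    have hr₀code : codeMapL (leftEnd (ellBM β M)) (seqOf ((u ++ s) ++ [false]) true) = r₀ :=
      codeMapL_seqOf_true hpos hdec hlim _
    have hpu : pfx (seqOf ((u ++ s) ++ [false]) true) u.length = u := by
      rw [pfx_seqOf_le true (by simp)]
      rw [List.append_assoc]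
      exact List.take_left
    have hsp := spineL hβ hM i (seqOf ((u ++ s) ++ [false]) true) u.length
    rw [hpu, hr₀code] at hsp
    have hφr₀ : φ i r₀ =
        codeMapL (leftEnd (ellBM β M)) (consSeq i (seqOf ((u ++ s) ++ [false]) true)) := by
      rw [← hr₀code, hφcode]
    have hgd := phi_gap_diff hβ hM hφgap hφcode i (u ++ s)
      (x := x) (y := r₀) ⟨hgapmem.1.le, hgapmem.2.le⟩ ⟨le_refl _, (gap_pos hpos hdec _).le⟩
    have hsl := gslope_bounds hβ hM i (u ++ s)
    have hxge : r₀ ≤ x := hgapmem.1.le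
    have hr₀ge : leftEnd (ellBM β M) u ≤ r₀ := by
      have h2 := nest_append hpos hdec (s ++ [false]) u
      have h3 : leftEnd (ellBM β M) ((u ++ s) ++ [false]) ≤ r₀ := by
        rw [hr₀, rightEnd]; linarith [hpos ((u ++ s) ++ [false])]
      rw [List.append_assoc] at h3
      linarith [h2.1, h3]
    have hl := phi_leftEnd hβ hM hφcode i u
    have e : φ i x - φ i (leftEnd (ellBM β M) u) =
        (codeMapL (leftEnd (ellBM β M)) (consSeq i (seqOf ((u ++ s) ++ [false]) true)) -
          leftEnd (ellBM β M) (i :: u)) + (φ i x - φ i r₀) := by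
      rw [hl, hφr₀]; ring
    constructor
    · have b1 : 1 / (5 * M) * (x - r₀) ≤ φ i x - φ i r₀ := by
        rw [hgd]
        exact mul_le_mul_of_nonneg_right hsl.1 (by linarith)
      have e2 : 1 / (5 * M) * (x - leftEnd (ellBM β M) u) =
          1 / (5 * M) * (r₀ - leftEnd (ellBM β M) u) + 1 / (5 * M) * (x - r₀) := by ring
      linarith [hsp.1]
    · have b1 : φ i x - φ i r₀ ≤ 3 / M * (x - r₀) := by
        rw [hgd]
        exact mul_le_mul_of_nonneg_right hsl.2 (by linarith)
      have e2 : 3 / M * (x - leftEnd (ellBM β M) u) =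
          3 / M * (r₀ - leftEnd (ellBM β M) u) + 3 / M * (x - r₀) := by ring
      linarith [hsp.2]
  · -- coding case
    have hpu : pfx ω u.length = u :=
      eq_of_mem_same_level hpos hdec _ _ (pfx_length ω u.length)
        (hxeq ▸ hmem u.length) hxu
    have h1 := spineL hβ hM i ω u.length
    rw [hpu] at h1
    rw [hxeq, hφcode i ω, phi_leftEnd hβ hM hφcode i u]
    exact h1

include hφgap hφcode in
lemma main_cmp (i : Bool) {x y : ℝ} (hx : x ∈ Set.Icc (0:ℝ) 1) (hy : y ∈ Set.Icc (0:ℝ) 1)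
    (hxy : x < y) :
    1 / (5 * M) * (y - x) ≤ φ i y - φ i x ∧ φ i y - φ i x ≤ 3 / M * (y - x) := by
  have hpos := ellpos hβ hM
  have hdec := elldec hβ hM
  set S := {n : ℕ | ∃ w : List Bool, w.length = n ∧
    x ∈ Set.Icc (leftEnd (ellBM β M) w) (rightEnd (ellBM β M) w) ∧
    y ∈ Set.Icc (leftEnd (ellBM β M) w) (rightEnd (ellBM β M) w)} with hS
  have h0 : 0 ∈ S := by
    refine ⟨[], rfl, ?_, ?_⟩ <;>
      rw [leftEnd_nil, rightEnd_nil, ellBM_nil] <;> assumption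
  have hBdd : BddAbove S := by
    have ht := tendsto_pow_atTop_nhds_zero_of_lt_one
      (show (0:ℝ) ≤ 4⁻¹ by norm_num) (show (4⁻¹:ℝ) < 1 by norm_num)
    have hev := ht.eventually (gt_mem_nhds (show (0:ℝ) < y - x by linarith))
    obtain ⟨N₀, hN₀⟩ := Filter.eventually_atTop.1 hev
    refine ⟨N₀, fun n hn => ?_⟩
    obtain ⟨w, hwlen, hxw, hyw⟩ := hn
    have h1 : y - x ≤ ellBM β M w := by
      have := hxw.1
      have h2 := hyw.2
      rw [rightEnd] at h2
      linarith
    have h2 : ellBM β M w ≤ (4⁻¹:ℝ) ^ n := by rw [← hwlen]; exact ell_le_pow hβ hM w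
    by_contra hcon
    push_neg at hcon
    linarith [hN₀ n hcon.le]
  obtain ⟨w, hwlen, hxw, hyw⟩ := Nat.sSup_mem ⟨0, h0⟩ hBdd
  have hnot : (sSup S) + 1 ∉ S := fun hc => by
    have := le_csSup hBdd hc; omega
  have hgap := gap_pos hpos hdec w
  have hxmem0 : x ≤ rightEnd (ellBM β M) (w ++ [false]) →
      x ∈ Set.Icc (leftEnd (ellBM β M) (w ++ [false]))
        (rightEnd (ellBM β M) (w ++ [false])) := fun h =>
    ⟨by rw [leftEnd_append_false]; exact hxw.1, h⟩
  have hymem0 : y ≤ rightEnd (ellBM β M) (w ++ [false]) →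
      y ∈ Set.Icc (leftEnd (ellBM β M) (w ++ [false]))
        (rightEnd (ellBM β M) (w ++ [false])) := fun h =>
    ⟨by rw [leftEnd_append_false]; exact hyw.1, h⟩
  have hxmem1 : leftEnd (ellBM β M) (w ++ [true]) ≤ x →
      x ∈ Set.Icc (leftEnd (ellBM β M) (w ++ [true]))
        (rightEnd (ellBM β M) (w ++ [true])) := fun h =>
    ⟨h, by rw [rightEnd_append_true]; exact hxw.2⟩
  have hymem1 : leftEnd (ellBM β M) (w ++ [true]) ≤ y →
      y ∈ Set.Icc (leftEnd (ellBM β M) (w ++ [true]))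
        (rightEnd (ellBM β M) (w ++ [true])) := fun h =>
    ⟨h, by rw [rightEnd_append_true]; exact hyw.2⟩
  have hsl := gslope_bounds hβ hM i w
  rcases le_or_gt x (rightEnd (ellBM β M) (w ++ [false])) with hx0 | hx0
  · rcases le_or_gt y (rightEnd (ellBM β M) (w ++ [false])) with hy0 | hy0
    · exact absurd ⟨w ++ [false], by simp [hwlen], hxmem0 hx0, hymem0 hy0⟩ hnot
    rcases lt_or_ge y (leftEnd (ellBM β M) (w ++ [true])) with hy1 | hy1
    · -- x in I(w0), y in gap
      have hc1 := right_cmp hβ hM hφgap hφcode i (w ++ [false]) hx (hxmem0 hx0)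
      have hgd := phi_gap_diff hβ hM hφgap hφcode i w (x := y)
        (y := rightEnd (ellBM β M) (w ++ [false]))
        ⟨hy0.le, hy1.le⟩ ⟨le_refl _, hgap.le⟩
      constructor
      · have b1 : 1 / (5 * M) * (y - rightEnd (ellBM β M) (w ++ [false])) ≤
            φ i y - φ i (rightEnd (ellBM β M) (w ++ [false])) := by
          rw [hgd]; exact mul_le_mul_of_nonneg_right hsl.1 (by linarith)
        have e : 1 / (5 * M) * (y - x) =
            1 / (5 * M) * (y - rightEnd (ellBM β M) (w ++ [false])) +
            1 / (5 * M) * (rightEnd (ellBM β M) (w ++ [false]) - x) := by ring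
        linarith [hc1.1]
      · have b1 : φ i y - φ i (rightEnd (ellBM β M) (w ++ [false])) ≤
            3 / M * (y - rightEnd (ellBM β M) (w ++ [false])) := by
          rw [hgd]; exact mul_le_mul_of_nonneg_right hsl.2 (by linarith)
        have e : 3 / M * (y - x) =
            3 / M * (y - rightEnd (ellBM β M) (w ++ [false])) +
            3 / M * (rightEnd (ellBM β M) (w ++ [false]) - x) := by ring
        linarith [hc1.2]
    · -- x in I(w0), y in I(w1)
      have hc1 := right_cmp hβ hM hφgap hφcode i (w ++ [false]) hx (hxmem0 hx0)
      have hc2 := left_cmp hβ hM hφgap hφcode i (w ++ [true]) hy (hymem1 hy1)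
      have hgd := phi_gap_diff hβ hM hφgap hφcode i w
        (x := leftEnd (ellBM β M) (w ++ [true]))
        (y := rightEnd (ellBM β M) (w ++ [false]))
        ⟨hgap.le, le_refl _⟩ ⟨le_refl _, hgap.le⟩
      constructor
      · have b1 : 1 / (5 * M) * (leftEnd (ellBM β M) (w ++ [true]) -
            rightEnd (ellBM β M) (w ++ [false])) ≤
            φ i (leftEnd (ellBM β M) (w ++ [true])) -
              φ i (rightEnd (ellBM β M) (w ++ [false])) := by
          rw [hgd]; exact mul_le_mul_of_nonneg_right hsl.1 (by linarith)
        have e : 1 / (5 * M) * (y - x) =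
            1 / (5 * M) * (y - leftEnd (ellBM β M) (w ++ [true])) +
            1 / (5 * M) * (leftEnd (ellBM β M) (w ++ [true]) -
              rightEnd (ellBM β M) (w ++ [false])) +
            1 / (5 * M) * (rightEnd (ellBM β M) (w ++ [false]) - x) := by ring
        linarith [hc1.1, hc2.1]
      · have b1 : φ i (leftEnd (ellBM β M) (w ++ [true])) -
              φ i (rightEnd (ellBM β M) (w ++ [false])) ≤
            3 / M * (leftEnd (ellBM β M) (w ++ [true]) -
              rightEnd (ellBM β M) (w ++ [false])) := by
          rw [hgd]; exact mul_le_mul_of_nonneg_right hsl.2 (by linarith)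
        have e : 3 / M * (y - x) =
            3 / M * (y - leftEnd (ellBM β M) (w ++ [true])) +
            3 / M * (leftEnd (ellBM β M) (w ++ [true]) -
              rightEnd (ellBM β M) (w ++ [false])) +
            3 / M * (rightEnd (ellBM β M) (w ++ [false]) - x) := by ring
        linarith [hc1.2, hc2.2]
  · rcases lt_or_ge x (leftEnd (ellBM β M) (w ++ [true])) with hx1 | hx1
    · rcases lt_or_ge y (leftEnd (ellBM β M) (w ++ [true])) with hy1 | hy1
      · -- both in gap
        have hgd := phi_gap_diff hβ hM hφgap hφcode i w (x := y) (y := x)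
          ⟨(by linarith), hy1.le⟩ ⟨hx0.le, hx1.le⟩
        constructor
        · rw [hgd]; exact mul_le_mul_of_nonneg_right hsl.1 (by linarith)
        · rw [hgd]; exact mul_le_mul_of_nonneg_right hsl.2 (by linarith)
      · -- x in gap, y in I(w1)
        have hc2 := left_cmp hβ hM hφgap hφcode i (w ++ [true]) hy (hymem1 hy1)
        have hgd := phi_gap_diff hβ hM hφgap hφcode i w
          (x := leftEnd (ellBM β M) (w ++ [true])) (y := x)
          ⟨hgap.le, le_refl _⟩ ⟨hx0.le, hx1.le⟩
        constructor
        · have b1 : 1 / (5 * M) * (leftEnd (ellBM β M) (w ++ [true]) - x) ≤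
              φ i (leftEnd (ellBM β M) (w ++ [true])) - φ i x := by
            rw [hgd]; exact mul_le_mul_of_nonneg_right hsl.1 (by linarith)
          have e : 1 / (5 * M) * (y - x) =
              1 / (5 * M) * (y - leftEnd (ellBM β M) (w ++ [true])) +
              1 / (5 * M) * (leftEnd (ellBM β M) (w ++ [true]) - x) := by ring
          linarith [hc2.1]
        · have b1 : φ i (leftEnd (ellBM β M) (w ++ [true])) - φ i x ≤
              3 / M * (leftEnd (ellBM β M) (w ++ [true]) - x) := by
            rw [hgd]; exact mul_le_mul_of_nonneg_right hsl.2 (by linarith)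
          have e : 3 / M * (y - x) =
              3 / M * (y - leftEnd (ellBM β M) (w ++ [true])) +
              3 / M * (leftEnd (ellBM β M) (w ++ [true]) - x) := by ring
          linarith [hc2.2]
    · -- both in I(w1)
      have hy1 : leftEnd (ellBM β M) (w ++ [true]) ≤ y := le_trans hx1 hxy.le
      exact absurd ⟨w ++ [true], by simp [hwlen], hxmem1 hx1, hymem1 hy1⟩ hnot
end Main

section Final
variable {β M : ℝ} {φ : Bool → ℝ → ℝ}
variable (hβ : β ∈ Set.Ioo (0:ℝ) 1) (hM : (100:ℝ) ≤ M)

include hβ hM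

lemma cantor_sub_unit : cantorOf (ellBM β M) ⊆ Set.Icc (0:ℝ) 1 := by
  intro x hx
  have h0 := Set.mem_iInter.1 hx 0
  obtain ⟨w, hlen, hmem⟩ := Set.mem_iUnion₂.1 h0
  have hw : w = [] := List.length_eq_zero_iff.1 hlen
  subst hw
  rwa [leftEnd_nil, rightEnd_nil, ellBM_nil] at hmem

lemma cantor_eq_range :
    cantorOf (ellBM β M) = Set.range (codeMapL (leftEnd (ellBM β M))) := by
  have hpos := ellpos hβ hM
  have hdec := elldec hβ hM
  have hlim := elllim hβ hM
  ext x
  constructor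
  · intro hx
    have hx01 : x ∈ Set.Icc (0:ℝ) (ellBM β M []) := by
      rw [ellBM_nil]; exact cantor_sub_unit hβ hM hx
    rcases totality hpos hdec hlim hx01 with ⟨v, hg⟩ | ⟨ω, hxeq, _⟩
    · exfalso
      have hn := Set.mem_iInter.1 hx (v.length + 1)
      obtain ⟨w, hlen, hmem⟩ := Set.mem_iUnion₂.1 hn
      obtain ⟨s, hs⟩ := gap_loc hpos hdec hmem hg
      have : v.length = w.length + s.length := by rw [hs]; simp
      omega
    · exact ⟨ω, hxeq.symm⟩
  · rintro ⟨ω, rfl⟩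
    apply Set.mem_iInter.2
    intro n
    exact Set.mem_iUnion₂.2 ⟨pfx ω n, pfx_length ω n, codeMapL_mem hpos hdec ω n⟩

lemma cantor_nonempty : (cantorOf (ellBM β M)).Nonempty := by
  refine ⟨0, Set.mem_iInter.2 fun n => ?_⟩
  refine Set.mem_iUnion₂.2 ⟨List.replicate n false, List.length_replicate, ?_⟩
  have hle : leftEnd (ellBM β M) (List.replicate n false) = 0 := by
    rw [leftEnd]
    apply Finset.sum_eq_zero
    intro k _
    have hg : (List.replicate n false).getD k false = false := by
      rcases lt_or_ge k n with h | h
      · rw [List.getD_eq_getElem _ _ (by simpa using h)]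
        simp
      · exact List.getD_eq_default _ _ (by simpa using h)
    rw [hg]
    simp
  rw [hle]
  exact ⟨le_refl 0, by rw [rightEnd, hle, zero_add]; exact (ellpos hβ hM _).le⟩

lemma cantor_compact : IsCompact (cantorOf (ellBM β M)) := by
  have hclosed : IsClosed (cantorOf (ellBM β M)) := by
    apply isClosed_iInter
    intro n
    exact Set.Finite.isClosed_biUnion (List.finite_length_eq Bool n)
      (fun w _ => isClosed_Icc)
  exact IsCompact.of_isClosed_subset isCompact_Icc hclosed (cantor_sub_unit hβ hM)

variable (hφcode : ∀ (i : Bool) (ω : ℕ → Bool),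
      φ i (codeMapL (leftEnd (ellBM β M)) ω) = codeMapL (leftEnd (ellBM β M)) (consSeq i ω))

include hφcode in
lemma cantor_self_similar :
    cantorOf (ellBM β M) =
      φ false '' cantorOf (ellBM β M) ∪ φ true '' cantorOf (ellBM β M) := by
  rw [cantor_eq_range hβ hM]
  have himg : ∀ i : Bool, φ i '' Set.range (codeMapL (leftEnd (ellBM β M))) =
      Set.range (fun ω => codeMapL (leftEnd (ellBM β M)) (consSeq i ω)) := by
    intro i
    rw [← Set.range_comp]
    exact congrArg Set.range (funext fun ω => hφcode i ω)
  rw [himg false, himg true]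
  ext x
  constructor
  · rintro ⟨ω, rfl⟩
    rcases Bool.eq_false_or_eq_true (ω 0) with h0 | h0
    · right
      refine ⟨fun n => ω (n + 1), ?_⟩
      show codeMapL (leftEnd (ellBM β M)) (consSeq true fun n => ω (n + 1)) = _
      rw [← h0, consSeq_eta]
    · left
      refine ⟨fun n => ω (n + 1), ?_⟩
      show codeMapL (leftEnd (ellBM β M)) (consSeq false fun n => ω (n + 1)) = _
      rw [← h0, consSeq_eta]
  · rintro (⟨ω, rfl⟩ | ⟨ω, rfl⟩) <;> exact ⟨_, rfl⟩
end Final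

/-- For `β ∈ (0,1)` and `M ≥ 100`, the maps `φ₀, φ₁` defined via the Cantor
construction of `E_{β,M} = cantorOf (ellBM β M)` (affine on gaps, shifting the coding on the
Cantor set itself) form a bi-Lipschitz IFS on `[0,1]` whose attractor is `E_{β,M}`. -/
theorem stmt6 (β M : ℝ) (hβ : β ∈ Set.Ioo (0:ℝ) 1) (hM : (100:ℝ) ≤ M)
    (φ : Bool → ℝ → ℝ)
    (hφgap : ∀ (i : Bool) (w : List Bool),
      ∀ x ∈ Set.Ioo (rightEnd (ellBM β M) (w ++ [false])) (leftEnd (ellBM β M) (w ++ [true])),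
        φ i x =
          (leftEnd (ellBM β M) ((i :: w) ++ [true]) -
              rightEnd (ellBM β M) ((i :: w) ++ [false])) /
              (leftEnd (ellBM β M) (w ++ [true]) - rightEnd (ellBM β M) (w ++ [false])) *
              (x - rightEnd (ellBM β M) (w ++ [false])) +
            rightEnd (ellBM β M) ((i :: w) ++ [false]))
    (hφcode : ∀ (i : Bool) (ω : ℕ → Bool),
      φ i (codeMapL (leftEnd (ellBM β M)) ω) = codeMapL (leftEnd (ellBM β M)) (consSeq i ω)) :
    ∃ A B : ℝ, 0 < A ∧ A ≤ B ∧ B < 1 ∧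
      (∀ i : Bool, ∀ x ∈ Set.Icc (0:ℝ) 1, ∀ y ∈ Set.Icc (0:ℝ) 1,
        A * |x - y| ≤ |φ i x - φ i y| ∧ |φ i x - φ i y| ≤ B * |x - y|) ∧
      (cantorOf (ellBM β M)).Nonempty ∧ IsCompact (cantorOf (ellBM β M)) ∧
      cantorOf (ellBM β M) =
        φ false '' cantorOf (ellBM β M) ∪ φ true '' cantorOf (ellBM β M) := by
  have hM0 : (0:ℝ) < M := hMpos hβ hM
  refine ⟨1 / (5 * M), 3 / M, by positivity, ?_, ?_, ?_, cantor_nonempty hβ hM,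
    cantor_compact hβ hM, cantor_self_similar hβ hM hφcode⟩
  · rw [div_le_div_iff₀ (by positivity) hM0]
    nlinarith
  · rw [div_lt_one hM0]
    linarith
  · intro i x hx y hy
    rcases lt_trichotomy x y with h | h | h
    · obtain ⟨b1, b2⟩ := main_cmp hβ hM hφgap hφcode i hx hy h
      have hA0 : (0:ℝ) < 1 / (5 * M) * (y - x) :=
        mul_pos (by positivity) (by linarith)
      have habs1 : |x - y| = y - x := by
        rw [abs_sub_comm]; exact abs_of_pos (by linarith)
      have habs2 : |φ i x - φ i y| = φ i y - φ i x := by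
        rw [abs_sub_comm]; exact abs_of_nonneg (by linarith)
      rw [habs1, habs2]
      exact ⟨b1, b2⟩
    · subst h
      simp
    · obtain ⟨b1, b2⟩ := main_cmp hβ hM hφgap hφcode i hy hx h
      have hA0 : (0:ℝ) < 1 / (5 * M) * (x - y) :=
        mul_pos (by positivity) (by linarith)
      have habs1 : |x - y| = x - y := abs_of_pos (by linarith)
      have habs2 : |φ i x - φ i y| = φ i x - φ i y := abs_of_nonneg (by linarith)
      rw [habs1, habs2]
      exact ⟨b1, b2⟩
end

section
/- Fix β ∈ (0,1) and define, for λ > log 2, D(λ) = max_{(p,q)∈[0,1]²} (β H(p) + (1−β) H(q)) / (λ + β(1−β)(q−p) log 2), where H(p) = −p log p − (1−p) log(1−p) (with 0 log 0 = 0). Then for every λ > log 2, D(λ) > (log 2)/λ. -/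
open Filter Set Metric MeasureTheory Topology
open scoped ENNReal

set_option maxHeartbeats 1600000 in
/-- For `β ∈ (0,1)` and every `λ > log 2`, `D(λ) > log 2 / λ`. -/
theorem stmt9 (β : ℝ) (hβ : β ∈ Set.Ioo (0:ℝ) 1) (lam : ℝ) (hlam : Real.log 2 < lam) :
    Real.log 2 / lam < Dfun β lam := by
  obtain ⟨hβ0, hβ1⟩ := hβ
  have hL : (0:ℝ) < Real.log 2 := Real.log_pos (by norm_num)
  set L := Real.log 2 with hLdef
  have hlam0 : (0:ℝ) < lam := lt_trans hL hlam
  -- Hent agrees with Mathlib's binEntropy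
  have hent_eq : ∀ p : ℝ, Hent p = Real.binEntropy p := by
    intro p
    simp only [Hent, Real.binEntropy, Real.log_inv]
    ring
  have hent_le : ∀ p : ℝ, Hent p ≤ L := by
    intro p; rw [hent_eq]; exact Real.binEntropy_le_log_two
  have hent_nonneg : ∀ p : ℝ, p ∈ Set.Icc (0:ℝ) 1 → 0 ≤ Hent p := by
    intro p hp; rw [hent_eq]; exact Real.binEntropy_nonneg hp.1 hp.2
  -- choose the perturbation t
  set t : ℝ := min (1/4) (β * L^2 / (8 * lam)) with ht_def
  have ht0 : 0 < t := lt_min (by norm_num) (by positivity)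
  have ht4 : t ≤ 1/4 := min_le_left _ _
  have htkey : t < β * L^2 / (4 * lam) := by
    have h1 : β * L^2 / (8 * lam) < β * L^2 / (4 * lam) :=
      div_lt_div_of_pos_left (by positivity) (by positivity) (by linarith)
    exact lt_of_le_of_lt (min_le_right _ _) h1
  have h4 : t * (4 * lam) < β * L^2 := (lt_div_iff₀ (by positivity)).mp htkey
  -- entropy bounds at the chosen points
  have hH2 : Hent (1/2 : ℝ) = L := by
    have : ((1:ℝ)/2) = 2⁻¹ := by norm_num
    unfold Hent
    rw [this, show (1 - (2⁻¹:ℝ)) = 2⁻¹ by norm_num, Real.log_inv]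
    ring
  have h1 : (0:ℝ) < 1 - 2*t := by linarith
  have h2 : (0:ℝ) < 1 + 2*t := by linarith
  have hq : L - 4*t^2 ≤ Hent (1/2 - t) := by
    have e1 : Real.log (1/2 - t) = Real.log (1 - 2*t) - L := by
      rw [show (1/2 - t : ℝ) = (1-2*t)/2 by ring, Real.log_div (ne_of_gt h1) two_ne_zero]
    have e2 : Real.log (1/2 + t) = Real.log (1 + 2*t) - L := by
      rw [show (1/2 + t : ℝ) = (1+2*t)/2 by ring, Real.log_div (ne_of_gt h2) two_ne_zero]
    have b1 : Real.log (1 - 2*t) ≤ -(2*t) := by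
      have := Real.log_le_sub_one_of_pos h1; linarith
    have b2 : Real.log (1 + 2*t) ≤ 2*t := by
      have := Real.log_le_sub_one_of_pos h2; linarith
    have c1 : (0:ℝ) ≤ 1/2 - t := by linarith
    have c2 : (0:ℝ) ≤ 1/2 + t := by linarith
    have m1 : (1/2 - t) * Real.log (1 - 2*t) ≤ (1/2 - t) * (-(2*t)) :=
      mul_le_mul_of_nonneg_left b1 c1
    have m2 : (1/2 + t) * Real.log (1 + 2*t) ≤ (1/2 + t) * (2*t) :=
      mul_le_mul_of_nonneg_left b2 c2
    unfold Hent
    rw [show (1 - (1/2 - t) : ℝ) = 1/2 + t by ring, e1, e2]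
    nlinarith [m1, m2]
  -- the set whose sup is Dfun
  unfold Dfun
  set f : ℝ × ℝ → ℝ := fun pq =>
    (β * Hent pq.1 + (1 - β) * Hent pq.2) /
      (lam + β * (1 - β) * (pq.2 - pq.1) * Real.log 2) with hf_def
  have hββ : β * (1 - β) ≤ 1/4 := by nlinarith [sq_nonneg (β - 1/2)]
  have hββ0 : 0 ≤ β * (1 - β) := by nlinarith
  have hdpos : (0:ℝ) < lam - L/4 := by linarith
  have hbdd : BddAbove (f '' (Set.Icc 0 1 ×ˢ Set.Icc 0 1)) := by
    refine ⟨L / (lam - L/4), ?_⟩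
    rintro x ⟨⟨p, q⟩, ⟨hp, hq'⟩, rfl⟩
    have hden : lam - L/4 ≤ lam + β * (1 - β) * (q - p) * L := by
      have hqp : -1 ≤ q - p := by
        simp only [Set.mem_Icc] at hp hq'; linarith [hp.2, hq'.1]
      nlinarith [mul_le_mul_of_nonneg_left hqp (by positivity : (0:ℝ) ≤ β * (1 - β) * L),
        mul_le_mul_of_nonneg_right hββ hL.le]
    have hnum_le : β * Hent p + (1 - β) * Hent q ≤ L := by
      have := hent_le p; have := hent_le q
      nlinarith [hent_le p, hent_le q]
    have hnum_nn : 0 ≤ β * Hent p + (1 - β) * Hent q := by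
      have := hent_nonneg p hp; have := hent_nonneg q hq'
      nlinarith
    simp only [hf_def, ← hLdef]
    exact div_le_div₀ hL.le hnum_le hdpos hden
  have hqmem : (1/2 - t : ℝ) ∈ Set.Icc (0:ℝ) 1 := ⟨by linarith, by linarith⟩
  have hpair : ((1/2 : ℝ), (1/2 - t : ℝ)) ∈ Set.Icc (0:ℝ) 1 ×ˢ Set.Icc (0:ℝ) 1 :=
    Set.mk_mem_prod ⟨by norm_num, by norm_num⟩ hqmem
  have hmem : f (1/2, 1/2 - t) ∈ f '' (Set.Icc 0 1 ×ˢ Set.Icc 0 1) :=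
    Set.mem_image_of_mem f hpair
  have hden2 : (0:ℝ) < lam - β * (1 - β) * t * L := by
    have h16 : β * (1 - β) * t * L ≤ 1/4 * (1/4) * L :=
      mul_le_mul_of_nonneg_right
        (mul_le_mul hββ ht4 ht0.le (by norm_num : (0:ℝ) ≤ 1/4)) hL.le
    linarith
  have hval : L / lam < f (1/2, 1/2 - t) := by
    have e : lam + β * (1 - β) * ((1/2 - t) - 1/2) * L = lam - β * (1 - β) * t * L := by ring
    simp only [hf_def, ← hLdef]
    rw [e, hH2, div_lt_div_iff₀ hlam0 hden2]
    nlinarith [mul_le_mul_of_nonneg_left hq (show (0:ℝ) ≤ (1-β) * lam by nlinarith),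
      mul_lt_mul_of_pos_left h4 (show (0:ℝ) < (1-β) * t by nlinarith)]
  calc L / lam < f (1/2, 1/2 - t) := hval
    _ ≤ _ := le_csSup hbdd hmem
end

section
/- Let β ∈ (0,1), M ≥ 100, a_0 = 1, a_1 = 2, and let (M_i)_{i≥1} be defined from a strictly increasing sequence (N_k)_{k≥1} of natural numbers with N_1 = 1 and N_{k+1}/N_k → ∞ by M_i = M if i ∈ [N_{2k−1}, N_{2k}) for some k and M_i = M+1 if i ∈ [N_{2k}, N_{2k+1}) for some k. Then for every infinite binary sequence ω = (ω_n)_{n≥1} ∈ {0,1}^ℕ, limsup_{n→∞} ( (a_{ω_1}⋯a_{ω_n})^β / (a_{ω_1}⋯a_{ω_{⌊βn⌋}}) · ∏_{i=1}^n M_i )^{1/n} ≥ M+1. Moreover, for every Bernoulli product measure ν on {0,1}^ℕ, limsup_{n→∞} ( (a_{ω_1}⋯a_{ω_n})^β / (a_{ω_1}⋯a_{ω_{⌊βn⌋}}) · ∏_{i=1}^n M_i )^{1/n} = M+1 for ν-almost every ω. -/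
open Filter Set Metric MeasureTheory Topology
open scoped ENNReal

private lemma exp_quad {x : ℝ} (hx : |x| ≤ 1) : Real.exp x ≤ 1 + x + x ^ 2 := by
  have h := Real.exp_bound hx (n := 2) (by norm_num)
  have h2 : ∑ m ∈ Finset.range 2, x ^ m / m.factorial = 1 + x := by
    simp [Finset.sum_range_succ]
  rw [h2] at h
  have h3 := (abs_sub_le_iff.1 h).1
  have h4 : |x| ^ 2 = x ^ 2 := sq_abs x
  have h5 : ((Nat.succ 2 : ℕ) : ℝ) / ((Nat.factorial 2 : ℕ) * (2:ℕ)) = 3 / 4 := by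
    norm_num [Nat.factorial]
  rw [h4, h5] at h3
  nlinarith [sq_nonneg x]

private lemma sum_prod_swap {n : ℕ} (w : Fin n → Bool → ℝ) :
    ∑ b : Fin n → Bool, ∏ k, w k (b k) = ∏ k, (w k false + w k true) := by
  rw [← Fintype.prod_sum (fun (k : Fin n) (y : Bool) => w k y)]
  congr 1
  ext k
  rw [Fintype.sum_bool, add_comm]


set_option maxHeartbeats 2000000 in
private lemma lemA (β M : ℝ) (hβ0 : 0 < β) (hβ1 : β < 1)
    (N : ℕ → ℕ) (hNmono : StrictMono N) (hN1le : ∀ k, 1 ≤ k → 1 ≤ N (2*k))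
    (hNlim2 : Filter.Tendsto (fun k => (N (2*k + 1) : ℝ) / (N (2*k) : ℝ)) Filter.atTop Filter.atTop)
    (Mseq : ℕ → ℝ)
    (hlow : ∀ j, 1 ≤ j → Real.log (M+1) - 1 ≤ Real.log (Mseq j))
    (heq : ∀ k, 1 ≤ k → ∀ i, N (2*k) ≤ i → i < N (2*k+1) → Mseq i = M + 1)
    (s : ℕ → ℝ) (hs0 : ∀ m, 0 ≤ s m) (hsle : ∀ m, s m ≤ m)
    (L : ℕ → ℝ) (B : ℝ) (hB : ∀ n, |L n| ≤ B)
    (hL : ∀ n : ℕ, L n = ((β * s n - s ⌊β * (n:ℝ)⌋₊) * Real.log 2 +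
        ∑ i ∈ Finset.range n, Real.log (Mseq (i+1))) / n) :
    Real.log (M+1) ≤ Filter.limsup L Filter.atTop := by
  by_contra hcon
  push_neg at hcon
  set Λ := Filter.limsup L Filter.atTop with hΛ
  have hbdd : Filter.IsBoundedUnder (· ≤ ·) Filter.atTop L :=
    isBoundedUnder_of ⟨B, fun n => (abs_le.1 (hB n)).2⟩
  set ε : ℝ := (Real.log (M+1) - Λ) / 2 with hε
  have hε0 : 0 < ε := by rw [hε]; linarith
  have hev : ∀ᶠ n in Filter.atTop, L n < Real.log (M+1) - ε := by
    apply Filter.eventually_lt_of_limsup_lt _ hbdd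
    rw [← hΛ]; rw [hε]; linarith
  obtain ⟨n₀, hn₀⟩ := Filter.eventually_atTop.1 hev
  have hlog2 : 0 < Real.log 2 := Real.log_pos (by norm_num)
  set c : ℝ := ε / (2 * Real.log 2) with hc
  have hc0 : 0 < c := div_pos hε0 (by linarith)
  set K : ℕ := ⌊β / c⌋₊ + 1 with hK
  have hK1 : 1 ≤ K := by omega
  have hβcK : β < c * K := by
    have h1 : β / c < (K : ℝ) := by
      rw [hK]; push_cast; exact Nat.lt_floor_add_one _
    calc β = c * (β / c) := by field_simp
    _ < c * K := mul_lt_mul_of_pos_left h1 hc0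
  set Cg : ℝ := 1 / (1 - β) with hCg
  have hCg0 : 0 < Cg := by
    have h1β : (0:ℝ) < 1 - β := by linarith
    rw [hCg]; exact div_pos one_pos h1β
  have hd0 : 0 < c * K - β := by linarith
  have hβK : (0:ℝ) < β ^ K := pow_pos hβ0 K
  clear_value Λ ε c K Cg
  set A : ℝ := (n₀ : ℝ) + Cg + 2 / ε + c * K * Cg / (c * K - β) + 2 with hA
  have hterms : (0:ℝ) ≤ (n₀:ℝ) ∧ (0:ℝ) ≤ 2/ε ∧ (0:ℝ) ≤ c * K * Cg / (c * K - β) := by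
    refine ⟨Nat.cast_nonneg _, div_nonneg (by norm_num) hε0.le, ?_⟩
    apply div_nonneg _ hd0.le
    have h1 : (0:ℝ) ≤ c * K := mul_nonneg hc0.le (Nat.cast_nonneg K)
    nlinarith [hCg0]
  have hA1 : 1 ≤ A := by rw [hA]; linarith [hterms.1, hterms.2.1, hterms.2.2, hCg0]
  -- choose k
  obtain ⟨k, hk1, hkcond⟩ : ∃ k, 1 ≤ k ∧
      2 * (A + Cg) / β ^ K ≤ (N (2*k+1):ℝ)/(N (2*k):ℝ) := by
    obtain ⟨k₀, hk₀⟩ := Filter.eventually_atTop.1 (hNlim2.eventually_ge_atTop (2 * (A + Cg) / β ^ K))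
    exact ⟨max 1 k₀, le_max_left _ _, hk₀ _ (le_max_right _ _)⟩
  have hN2k1 : 1 ≤ N (2*k) := hN1le k hk1
  have hN2kpos : (0:ℝ) < N (2*k) := by exact_mod_cast Nat.lt_of_lt_of_le Nat.zero_lt_one hN2k1
  have hN01 : (1:ℝ) ≤ N (2*k) := by exact_mod_cast hN2k1
  have hltN : N (2*k) < N (2*k+1) := hNmono (by omega)
  set n : ℕ := N (2*k+1) - 1 with hn
  have hncast : (n:ℝ) = (N (2*k+1) : ℝ) - 1 := by
    rw [hn]; push_cast [Nat.cast_sub (by omega : 1 ≤ N (2*k+1))]; ring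
  have hnN : N (2*k) ≤ n := by omega
  have hnlt : n < N (2*k+1) := by omega
  have hN2 : 2 ≤ N (2*k+1) := by omega
  have hnhalf : (N (2*k+1) : ℝ) / 2 ≤ (n:ℝ) := by
    rw [hncast]
    have : (2:ℝ) ≤ (N (2*k+1):ℝ) := by exact_mod_cast hN2
    linarith
  clear_value A
  clear_value n
  have hkey : A * N (2*k) ≤ β ^ K * n - Cg := by
    have h1 : (2 * (A + Cg) / β ^ K) * (N (2*k):ℝ) ≤ (N (2*k+1):ℝ) :=
      (le_div_iff₀ hN2kpos).1 hkcond
    have h3 : (β ^ K) * ((2 * (A + Cg) / β ^ K) * (N (2*k):ℝ)) ≤ β ^ K * (N (2*k+1):ℝ) :=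
      mul_le_mul_of_nonneg_left h1 hβK.le
    have h2 : β ^ K * (2 * (A + Cg) / β ^ K) = 2 * (A + Cg) := by field_simp
    rw [← mul_assoc, h2] at h3
    have h4 : β ^ K * (N (2*k+1):ℝ) ≤ β ^ K * (2 * (n:ℝ)) :=
      mul_le_mul_of_nonneg_left (by linarith) hβK.le
    nlinarith [hCg0, hA1]
  -- the iterated sequence
  set nj : ℕ → ℕ := fun j => (fun m : ℕ => ⌊β * (m:ℝ)⌋₊)^[j] n with hnjdef
  have hnj0 : nj 0 = n := rfl
  have hnjsucc : ∀ j, nj (j+1) = ⌊β * (nj j : ℝ)⌋₊ := fun j =>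
    Function.iterate_succ_apply' _ j n
  clear_value nj
  have f3 : ∀ j, (nj j : ℝ) ≤ β ^ j * n := by
    intro j; induction j with
    | zero => simp [hnj0]
    | succ j ih =>
      rw [hnjsucc]
      calc (⌊β * (nj j : ℝ)⌋₊ : ℝ) ≤ β * (nj j : ℝ) := Nat.floor_le (by positivity)
      _ ≤ β * (β ^ j * n) := mul_le_mul_of_nonneg_left ih hβ0.le
      _ = β ^ (j+1) * n := by ring
  have f4 : ∀ j, β ^ j * n - Cg ≤ (nj j : ℝ) := by
    intro j; induction j with
    | zero => simp only [hnj0, pow_zero, one_mul]; linarith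
    | succ j ih =>
      rw [hnjsucc]
      have h1 : β * (nj j : ℝ) - 1 < (⌊β * (nj j : ℝ)⌋₊ : ℝ) := Nat.sub_one_lt_floor _
      have h2 : β ^ (j+1) * n - β * Cg ≤ β * (nj j : ℝ) := by
        calc β ^ (j+1) * (n:ℝ) - β * Cg = β * (β ^ j * n - Cg) := by ring
        _ ≤ β * (nj j : ℝ) := mul_le_mul_of_nonneg_left ih hβ0.le
      have h3 : β * Cg + 1 = Cg := by
        have h1β : (1:ℝ) - β ≠ 0 := by linarith
        rw [hCg]; field_simp; ring
      linarith
  have hφm : ∀ m : ℕ, ⌊β * (m:ℝ)⌋₊ ≤ m := by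
    intro m
    have h1 : (⌊β * (m:ℝ)⌋₊ : ℝ) ≤ β * m := Nat.floor_le (by positivity)
    have h2 : β * (m:ℝ) ≤ m := mul_le_of_le_one_left (Nat.cast_nonneg m) hβ1.le
    exact_mod_cast le_trans h1 h2
  have hnjle : ∀ j, nj j ≤ n := by
    intro j; induction j with
    | zero => exact hnj0.le
    | succ j ih => rw [hnjsucc]; exact le_trans (hφm _) ih
  have hlo : ∀ j, j ≤ K → A * N (2*k) ≤ (nj j : ℝ) := by
    intro j hj
    have h1 : β ^ K ≤ β ^ j := pow_le_pow_of_le_one hβ0.le hβ1.le hj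
    have h2 : β ^ K * (n:ℝ) ≤ β ^ j * n :=
      mul_le_mul_of_nonneg_right h1 (Nat.cast_nonneg n)
    linarith [f4 j, hkey]
  have hAn₀ : (n₀:ℝ) ≤ A := by rw [hA]; linarith [hterms.2.1, hterms.2.2, hCg0]
  have hA0 : (0:ℝ) ≤ A := by linarith
  have hAN : A ≤ A * N (2*k) := by
    have h := mul_le_mul_of_nonneg_left hN01 hA0
    linarith [h]
  have hm1 : ∀ j, j ≤ K → N (2*k) ≤ nj j := by
    intro j hj
    have h0 : (N (2*k):ℝ) ≤ A * N (2*k) := by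
      have h := mul_le_mul_of_nonneg_right hA1 hN2kpos.le
      linarith [h]
    have h1 : (N (2*k) : ℝ) ≤ (nj j : ℝ) := le_trans h0 (hlo j hj)
    exact_mod_cast h1
  have hmn₀ : ∀ j, j ≤ K → n₀ ≤ nj j := by
    intro j hj
    have h1 : (n₀ : ℝ) ≤ (nj j : ℝ) := le_trans (le_trans hAn₀ hAN) (hlo j hj)
    exact_mod_cast h1
  -- lower bound on log-sums of Mseq
  have hq : ∀ m : ℕ, N (2*k) ≤ m → m < N (2*k+1) →
      (m:ℝ) * Real.log (M+1) - N (2*k) ≤ ∑ i ∈ Finset.range m, Real.log (Mseq (i+1)) := by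
    intro m hm1' hm2'
    have hterm : ∀ i ∈ Finset.range m,
        Real.log (M+1) - (if i+1 < N (2*k) then (1:ℝ) else 0) ≤ Real.log (Mseq (i+1)) := by
      intro i hi
      rw [Finset.mem_range] at hi
      by_cases h : i + 1 < N (2*k)
      · simpa [h] using hlow (i+1) (by omega)
      · simp only [h, if_false, sub_zero]
        rw [heq k hk1 (i+1) (by omega) (by omega)]
    have hsum := Finset.sum_le_sum hterm
    rw [Finset.sum_sub_distrib, Finset.sum_const, Finset.card_range] at hsum
    have hcard : ∑ i ∈ Finset.range m, (if i+1 < N (2*k) then (1:ℝ) else 0) ≤ (N (2*k) : ℝ) := by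
      rw [Finset.sum_boole]
      have hsub : (Finset.range m).filter (fun i => i+1 < N (2*k)) ⊆ Finset.range (N (2*k)) := by
        intro i hi
        simp only [Finset.mem_filter, Finset.mem_range] at hi ⊢
        omega
      have := Finset.card_le_card hsub
      rw [Finset.card_range] at this
      exact_mod_cast this
    have : (m:ℝ) * Real.log (M+1) = (m : ℕ) • Real.log (M+1) := by
      rw [nsmul_eq_mul]
    rw [this]
    linarith [hsum, hcard]
  -- the key step inequality
  have hstep : ∀ j, j < K → β * s (nj j) + c * (nj j : ℝ) ≤ s (nj (j+1)) := by
    intro j hjK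
    have hjK' : j ≤ K := hjK.le
    have hm0 : n₀ ≤ nj j := hmn₀ j hjK'
    have hLm := hn₀ (nj j) hm0
    have hmN : N (2*k) ≤ nj j := hm1 j hjK'
    have hm1'' : 1 ≤ nj j := le_trans hN2k1 hmN
    have hmpos : (0:ℝ) < (nj j : ℝ) := by exact_mod_cast hm1''
    rw [hL (nj j), div_lt_iff₀ hmpos] at hLm
    have hqm := hq (nj j) hmN (lt_of_le_of_lt (hnjle j) hnlt)
    have hNm : (N (2*k):ℝ) ≤ ε/2 * (nj j : ℝ) := by
      have h1 := hlo j hjK'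
      have hA2 : 2/ε + 1 ≤ A := by
        rw [hA]; linarith [hterms.1, hterms.2.2, hCg0]
      have h2 : (2/ε + 1) * (N (2*k):ℝ) ≤ (nj j : ℝ) :=
        le_trans (mul_le_mul_of_nonneg_right hA2 hN2kpos.le) h1
      have h3 : (0:ℝ) < ε/2 := by linarith
      rw [← sub_nonneg]
      have : ε/2 * ((2/ε + 1) * (N (2*k):ℝ)) - (N (2*k):ℝ) = ε/2 * (N (2*k):ℝ) := by
        field_simp; ring
      nlinarith [mul_le_mul_of_nonneg_left h2 h3.le]
    have h5 : (β * s (nj j) - s ⌊β * ((nj j : ℕ):ℝ)⌋₊) * Real.log 2 ≤ -(ε/2) * (nj j : ℝ) := by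
      nlinarith [hLm, hqm, hNm]
    have h6 : β * s (nj j) - s ⌊β * ((nj j : ℕ):ℝ)⌋₊ ≤ -(ε/2) * (nj j : ℝ) / Real.log 2 :=
      (le_div_iff₀ hlog2).2 h5
    have h7 : -(ε/2) * (nj j : ℝ) / Real.log 2 = -(c * (nj j : ℝ)) := by
      rw [hc]; field_simp
    rw [h7] at h6
    rw [hnjsucc j]
    linarith
  -- the induction
  have hP : ∀ j, j ≤ K → c * ∑ i ∈ Finset.range j, β ^ (j-1-i) * (nj i : ℝ) ≤ s (nj j) := by
    intro j
    induction j with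
    | zero => intro _; simpa using hs0 (nj 0)
    | succ j ih =>
      intro hj1
      have hjK : j < K := hj1
      have ihh := ih hjK.le
      have hst := hstep j hjK
      have hsum : ∑ i ∈ Finset.range (j+1), β ^ (j-i) * (nj i : ℝ)
          = β * ∑ i ∈ Finset.range j, β ^ (j-1-i) * (nj i : ℝ) + (nj j : ℝ) := by
        rw [Finset.sum_range_succ, Nat.sub_self, pow_zero, one_mul, Finset.mul_sum]
        congr 1
        apply Finset.sum_congr rfl
        intro i hi
        rw [Finset.mem_range] at hi
        have hji : j - i = (j - 1 - i) + 1 := by omega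
        rw [hji, pow_succ]; ring
      have hexp : ∀ i, j + 1 - 1 - i = j - i := fun i => by omega
      simp only [Nat.add_sub_cancel]
      rw [hsum]
      nlinarith [mul_le_mul_of_nonneg_left ihh hβ0.le, hst]
  -- conclusion
  have hPK := hP K le_rfl
  have hsum_lb : (K:ℝ) * (β ^ (K-1) * n - Cg) ≤ ∑ i ∈ Finset.range K, β ^ (K-1-i) * (nj i : ℝ) := by
    have hterm2 : ∀ i ∈ Finset.range K, β ^ (K-1) * (n:ℝ) - Cg ≤ β ^ (K-1-i) * (nj i:ℝ) := by
      intro i hi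
      rw [Finset.mem_range] at hi
      have h1 : β ^ i * (n:ℝ) - Cg ≤ (nj i : ℝ) := f4 i
      have h2 : β ^ (K-1-i) * (β ^ i * (n:ℝ) - Cg) ≤ β ^ (K-1-i) * (nj i : ℝ) :=
        mul_le_mul_of_nonneg_left h1 (pow_nonneg hβ0.le _)
      have h3 : β ^ (K-1-i) * β ^ i = β ^ (K-1) := by
        rw [← pow_add]; congr 1; omega
      have h4 : β ^ (K-1-i) ≤ 1 := pow_le_one₀ hβ0.le hβ1.le
      nlinarith [hCg0, pow_nonneg hβ0.le (K-1-i)]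
    calc (K:ℝ) * (β^(K-1)*(n:ℝ) - Cg) = ∑ _i ∈ Finset.range K, (β^(K-1)*(n:ℝ) - Cg) := by
          rw [Finset.sum_const, Finset.card_range, nsmul_eq_mul]
    _ ≤ _ := Finset.sum_le_sum hterm2
  have hfin1 : c * ((K:ℝ) * (β^(K-1)*(n:ℝ) - Cg)) ≤ s (nj K) :=
    le_trans (mul_le_mul_of_nonneg_left hsum_lb hc0.le) hPK
  have hfin2 : s (nj K) ≤ (nj K : ℝ) := hsle _
  have hfin3 : (nj K : ℝ) ≤ β ^ K * n := f3 K
  have hKpow : β ^ K = β * β ^ (K-1) := by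
    rw [← pow_succ']; congr 1; omega
  have hA_le : A ≤ β ^ K * n := by nlinarith [hkey, hCg0, hA1]
  have hAd : c*K*Cg/(c*K-β) + 2 ≤ A := by
    rw [hA]; linarith [hterms.1, hterms.2.1, hCg0]
  have hfinal : (c * K - β) * (β^(K-1) * (n:ℝ)) ≤ c * K * Cg := by
    nlinarith [hfin1, hfin2, hfin3, hKpow]
  have hge : A ≤ β^(K-1) * (n:ℝ) := by
    have hb1 : β ^ K * (n:ℝ) ≤ β ^ (K-1) * n := by
      rw [hKpow]
      have hbn : (0:ℝ) ≤ β^(K-1) * (n:ℝ) := mul_nonneg (pow_nonneg hβ0.le _) (Nat.cast_nonneg n)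
      nlinarith [hbn]
    linarith
  have hcontr1 : (c*K-β) * A ≤ c * K * Cg :=
    le_trans (mul_le_mul_of_nonneg_left hge hd0.le) hfinal
  have hdiv : (c*K-β) * (c*K*Cg/(c*K-β) + 2) = c*K*Cg + 2*(c*K-β) := by
    field_simp
  nlinarith [mul_le_mul_of_nonneg_left hAd hd0.le, hdiv, hd0]

set_option maxHeartbeats 1000000 in
private lemma lemB (β : ℝ) (hβ0 : 0 < β) (hβ1 : β < 1)
    (ν : Measure (ℕ → Bool)) (p : Bool → ℝ)
    (hp : ∀ b, 0 ≤ p b) (hsum : p false + p true = 1)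
    (hcyl : ∀ (n : ℕ) (b : Fin n → Bool),
      ν {ω | ∀ k : Fin n, ω k = b k} = ENNReal.ofReal (∏ k, p (b k)))
    (ε : ℝ) (hε0 : 0 < ε) (hε1 : ε ≤ 1) :
    ∀ᵐ ω ∂ν, ∀ᶠ n in Filter.atTop,
      β * (∑ k ∈ Finset.range n, if ω k then (1:ℝ) else 0)
        - (∑ k ∈ Finset.range ⌊β * (n:ℝ)⌋₊, if ω k then (1:ℝ) else 0) ≤ ε * n := by
  have ht0 : 0 < ε/2 := by linarith
  have ht1 : ε/2 ≤ 1 := by linarith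
  have hp1 : p true ≤ 1 := by linarith [hp false]
  have hp1' : p false ≤ 1 := by linarith [hp true]
  set Bad : ℕ → Set (ℕ → Bool) := fun n => {ω | ε * n <
    β * (∑ k ∈ Finset.range n, if ω k then (1:ℝ) else 0)
      - (∑ k ∈ Finset.range ⌊β * (n:ℝ)⌋₊, if ω k then (1:ℝ) else 0)} with hBad
  have key : ∀ n : ℕ, ν (Bad n) ≤ ENNReal.ofReal (Real.exp 1 * Real.exp (-(ε^2/4) * n)) := by
    intro n
    set m : ℕ := ⌊β * (n:ℝ)⌋₊ with hm
    have hmβ : (m:ℝ) ≤ β * n := Nat.floor_le (by positivity)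
    have hmβ' : β * n < m + 1 := Nat.lt_floor_add_one _
    have hmn : m ≤ n := by
      have h1 : β * (n:ℝ) ≤ (n:ℝ) := mul_le_of_le_one_left (Nat.cast_nonneg n) hβ1.le
      have h2 : (m:ℝ) ≤ (n:ℝ) := by linarith
      exact_mod_cast h2
    set cf : ℕ → ℝ := fun k => β - (if k < m then 1 else 0) with hcf
    set G : (Fin n → Bool) → ℝ :=
      fun b => ∑ k : Fin n, cf k * (if b k then (1:ℝ) else 0) with hG
    have hGom : ∀ ω : ℕ → Bool,
        β * (∑ k ∈ Finset.range n, if ω k then (1:ℝ) else 0)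
          - (∑ k ∈ Finset.range m, if ω k then (1:ℝ) else 0)
        = G (fun k : Fin n => ω k) := by
      intro ω
      rw [hG]
      dsimp only
      rw [Fin.sum_univ_eq_sum_range (fun k => cf k * (if ω k then (1:ℝ) else 0)) n]
      have hsplit : ∑ k ∈ Finset.range n, cf k * (if ω k then (1:ℝ) else 0)
          = β * (∑ k ∈ Finset.range n, if ω k then (1:ℝ) else 0)
            - ∑ k ∈ Finset.range n, (if k < m then (if ω k then (1:ℝ) else 0) else 0) := by
        rw [Finset.mul_sum, ← Finset.sum_sub_distrib]
        apply Finset.sum_congr rfl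
        intro k _
        rw [hcf]
        by_cases h : k < m <;> by_cases h2 : ω k <;> simp [h, h2]
      have hcut : ∑ k ∈ Finset.range n, (if k < m then (if ω k then (1:ℝ) else 0) else 0)
          = ∑ k ∈ Finset.range m, (if ω k then (1:ℝ) else 0) := by
        have hfil : Finset.filter (fun k => k < m) (Finset.range n) = Finset.range m := by
          ext i; simp only [Finset.mem_filter, Finset.mem_range]; omega
        rw [← Finset.sum_filter, hfil]
      rw [hsplit, hcut]
    -- inclusion into cylinders
    set badF : Finset (Fin n → Bool) := Finset.univ.filter (fun b => ε * n < G b) with hbadF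
    have hsub : Bad n ⊆ ⋃ b ∈ badF, {ω : ℕ → Bool | ∀ k : Fin n, ω k = b k} := by
      intro ω hω
      simp only [hBad, Set.mem_setOf_eq] at hω
      rw [← hm] at hω
      refine Set.mem_iUnion₂.2 ⟨fun k : Fin n => ω k, ?_, fun k => rfl⟩
      rw [hbadF]
      refine Finset.mem_filter.2 ⟨Finset.mem_univ _, ?_⟩
      rw [← hGom ω]
      exact hω
    have hmeas : ν (Bad n) ≤ ∑ b ∈ badF, ENNReal.ofReal (∏ k, p (b k)) := by
      calc ν (Bad n) ≤ ν (⋃ b ∈ badF, {ω : ℕ → Bool | ∀ k : Fin n, ω k = b k}) :=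
            measure_mono hsub
      _ ≤ ∑ b ∈ badF, ν {ω : ℕ → Bool | ∀ k : Fin n, ω k = b k} :=
            measure_biUnion_finset_le _ _
      _ = ∑ b ∈ badF, ENNReal.ofReal (∏ k, p (b k)) :=
            Finset.sum_congr rfl (fun b _ => hcyl n b)
    -- per-factor bound
    have hcfabs : ∀ k : ℕ, |cf k| ≤ 1 := by
      intro k
      rw [hcf]
      by_cases h : k < m
      · simp only [h, if_true]
        rw [abs_le]; constructor <;> linarith
      · simp only [h, if_false]
        rw [abs_le]; constructor <;> linarith
    have hfact : ∀ k : ℕ, p false + p true * Real.exp (ε/2 * cf k)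
        ≤ Real.exp (p true * (ε/2 * cf k) + (ε/2)^2) := by
      intro k
      have habs : |ε/2 * cf k| ≤ 1 := by
        rw [abs_mul, abs_of_nonneg ht0.le]
        have h1 : ε/2 * |cf k| ≤ ε/2 * 1 :=
          mul_le_mul_of_nonneg_left (hcfabs k) ht0.le
        linarith
      have hq := exp_quad habs
      have h1 : p true * Real.exp (ε/2 * cf k)
          ≤ p true * (1 + ε/2 * cf k + (ε/2 * cf k)^2) :=
        mul_le_mul_of_nonneg_left hq (hp true)
      have h2 : p false + p true * (1 + ε/2 * cf k + (ε/2 * cf k)^2)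
          = 1 + (p true * (ε/2 * cf k) + p true * (ε/2 * cf k)^2) := by
        linear_combination hsum
      have hc2 : (ε/2 * cf k)^2 ≤ (ε/2)^2 := by
        have := sq_abs (ε/2 * cf k)
        have h3 : |ε/2 * cf k| ≤ ε/2 := by
          rw [abs_mul, abs_of_nonneg ht0.le]
          have h1' : ε/2 * |cf k| ≤ ε/2 * 1 :=
            mul_le_mul_of_nonneg_left (hcfabs k) ht0.le
          linarith
        nlinarith [abs_nonneg (ε/2 * cf k)]
      have h3 : p true * (ε/2 * cf k)^2 ≤ (ε/2)^2 := by
        nlinarith [sq_nonneg (ε/2 * cf k), hp true]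
      have h4 := Real.add_one_le_exp (p true * (ε/2 * cf k) + (ε/2)^2)
      linarith
    -- the real-valued estimate
    have hreal : ∑ b ∈ badF, ∏ k, p (b k)
        ≤ Real.exp 1 * Real.exp (-(ε^2/4) * n) := by
      have step1 : ∀ b ∈ badF, ∏ k : Fin n, p (b k)
          ≤ (∏ k : Fin n, p (b k)) * Real.exp (ε/2 * (G b - ε * n)) := by
        intro b hb
        rw [hbadF, Finset.mem_filter] at hb
        have hGb : ε * n < G b := hb.2
        have hone : (1:ℝ) ≤ Real.exp (ε/2 * (G b - ε * n)) :=
          Real.one_le_exp (by nlinarith)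
        exact le_mul_of_one_le_right (Finset.prod_nonneg (fun k _ => hp _)) hone
      have step2 : ∑ b ∈ badF, ∏ k : Fin n, p (b k)
          ≤ ∑ b : Fin n → Bool, (∏ k : Fin n, p (b k)) * Real.exp (ε/2 * (G b - ε * n)) := by
        calc ∑ b ∈ badF, ∏ k : Fin n, p (b k)
            ≤ ∑ b ∈ badF, (∏ k : Fin n, p (b k)) * Real.exp (ε/2 * (G b - ε * n)) :=
              Finset.sum_le_sum step1
        _ ≤ ∑ b : Fin n → Bool, (∏ k : Fin n, p (b k)) * Real.exp (ε/2 * (G b - ε * n)) :=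
              Finset.sum_le_sum_of_subset_of_nonneg (Finset.filter_subset _ _)
                (fun b _ _ => mul_nonneg (Finset.prod_nonneg fun k _ => hp _)
                  (Real.exp_pos _).le)
      have step3 : ∀ b : Fin n → Bool,
          (∏ k : Fin n, p (b k)) * Real.exp (ε/2 * (G b - ε * n))
          = Real.exp (-(ε/2 * (ε * n))) *
            ∏ k : Fin n, (p (b k) *
              Real.exp (ε/2 * (cf k * (if b k then (1:ℝ) else 0)))) := by
        intro b
        have hGexp : ε/2 * (G b - ε * n)
            = (∑ k : Fin n, ε/2 * (cf k * (if b k then (1:ℝ) else 0))) + (-(ε/2 * (ε * n))) := by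
          rw [hG]; dsimp only
          rw [mul_sub, Finset.mul_sum]; ring
        rw [hGexp, Real.exp_add, Real.exp_sum, Finset.prod_mul_distrib]
        ring
      have step4 : ∑ b : Fin n → Bool,
          (∏ k : Fin n, p (b k)) * Real.exp (ε/2 * (G b - ε * n))
          = Real.exp (-(ε/2 * (ε * n))) *
            ∏ k : Fin n, (p false + p true * Real.exp (ε/2 * cf k)) := by
        rw [Finset.sum_congr rfl (fun b _ => step3 b), ← Finset.mul_sum]
        congr 1
        rw [sum_prod_swap (fun (k : Fin n) (y : Bool) =>
          p y * Real.exp (ε/2 * (cf k * (if y then (1:ℝ) else 0))))]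
        apply Finset.prod_congr rfl
        intro k _
        simp
      have step5 : ∏ k : Fin n, (p false + p true * Real.exp (ε/2 * cf k))
          ≤ Real.exp (∑ k : Fin n, (p true * (ε/2 * cf k) + (ε/2)^2)) := by
        rw [Real.exp_sum]
        apply Finset.prod_le_prod
        · intro k _
          exact add_nonneg (hp false) (mul_nonneg (hp true) (Real.exp_pos _).le)
        · intro k _
          exact hfact k
      have hsumcf : ∑ k : Fin n, cf (k:ℕ) = β * n - m := by
        rw [Fin.sum_univ_eq_sum_range (fun k => cf k) n]
        have hfil2 : Finset.filter (fun k => k < m) (Finset.range n) = Finset.range m := by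
          ext i; simp only [Finset.mem_filter, Finset.mem_range]; omega
        have : ∑ k ∈ Finset.range n, cf k
            = ∑ k ∈ Finset.range n, (β - (if k < m then (1:ℝ) else 0)) := by
          apply Finset.sum_congr rfl; intro k _; rw [hcf]
        rw [this, Finset.sum_sub_distrib, Finset.sum_const, Finset.card_range, nsmul_eq_mul,
          Finset.sum_boole, hfil2, Finset.card_range]
        ring
      have hexps : ∑ k : Fin n, (p true * (ε/2 * cf k) + (ε/2)^2)
          = p true * (ε/2) * (∑ k : Fin n, cf (k:ℕ)) + n * (ε/2)^2 := by
        rw [Finset.sum_add_distrib, Finset.mul_sum, Finset.sum_const, Finset.card_univ,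
          Fintype.card_fin, nsmul_eq_mul]
        congr 1
        apply Finset.sum_congr rfl
        intro k _
        ring
      have hexpb : ∑ k : Fin n, (p true * (ε/2 * cf k) + (ε/2)^2) ≤ 1 + n * (ε/2)^2 := by
        rw [hexps, hsumcf]
        have h01 : (0:ℝ) ≤ β * n - m := by linarith
        have h02 : β * (n:ℝ) - m ≤ 1 := by linarith
        have ha1 : p true * (ε/2) ≤ 1 := mul_le_one₀ hp1 ht0.le ht1
        have ha0 : (0:ℝ) ≤ p true * (ε/2) := mul_nonneg (hp true) ht0.le
        have hb1 : p true * (ε/2) * (β * n - m) ≤ 1 := mul_le_one₀ ha1 h01 h02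
        linarith
      have hfinal2 : Real.exp (-(ε/2 * (ε * n))) *
          ∏ k : Fin n, (p false + p true * Real.exp (ε/2 * cf k))
          ≤ Real.exp 1 * Real.exp (-(ε^2/4) * n) := by
        calc Real.exp (-(ε/2 * (ε * n))) *
            ∏ k : Fin n, (p false + p true * Real.exp (ε/2 * cf k))
            ≤ Real.exp (-(ε/2 * (ε * n))) * Real.exp (1 + n * (ε/2)^2) := by
              apply mul_le_mul_of_nonneg_left _ (Real.exp_pos _).le
              exact le_trans step5 (Real.exp_le_exp.2 hexpb)
        _ = Real.exp 1 * Real.exp (-(ε^2/4) * n) := by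
              rw [← Real.exp_add, ← Real.exp_add]
              congr 1
              ring
      calc ∑ b ∈ badF, ∏ k, p (b k)
          ≤ ∑ b : Fin n → Bool, (∏ k : Fin n, p (b k)) * Real.exp (ε/2 * (G b - ε * n)) :=
            step2
      _ = Real.exp (-(ε/2 * (ε * n))) *
            ∏ k : Fin n, (p false + p true * Real.exp (ε/2 * cf k)) := step4
      _ ≤ Real.exp 1 * Real.exp (-(ε^2/4) * n) := hfinal2
    calc ν (Bad n) ≤ ∑ b ∈ badF, ENNReal.ofReal (∏ k, p (b k)) := hmeas
    _ = ENNReal.ofReal (∑ b ∈ badF, ∏ k, p (b k)) :=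
        (ENNReal.ofReal_sum_of_nonneg (fun b _ => Finset.prod_nonneg fun k _ => hp _)).symm
    _ ≤ ENNReal.ofReal (Real.exp 1 * Real.exp (-(ε^2/4) * n)) :=
        ENNReal.ofReal_le_ofReal hreal
  -- Borel-Cantelli
  have hgeo : Summable (fun n : ℕ => Real.exp 1 * Real.exp (-(ε^2/4)) ^ n) :=
    (summable_geometric_of_lt_one (Real.exp_pos _).le
      (Real.exp_lt_one_iff.2 (by nlinarith))).mul_left _
  have htsum : (∑' n, ν (Bad n)) ≠ ⊤ := by
    have h1 : (∑' n, ν (Bad n))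
        ≤ ∑' n : ℕ, ENNReal.ofReal (Real.exp 1 * Real.exp (-(ε^2/4)) ^ n) := by
      apply ENNReal.tsum_le_tsum
      intro n
      have hk := key n
      rwa [show Real.exp (-(ε^2/4) * n) = Real.exp (-(ε^2/4)) ^ n from by
        rw [mul_comm, Real.exp_nat_mul]] at hk
    have h2 := ENNReal.ofReal_tsum_of_nonneg (fun n : ℕ => by positivity) hgeo
    rw [← h2] at h1
    exact (lt_of_le_of_lt h1 ENNReal.ofReal_lt_top).ne
  filter_upwards [MeasureTheory.ae_eventually_notMem htsum] with ω hω
  refine hω.mono (fun n hn => ?_)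
  simp only [hBad, Set.mem_setOf_eq, not_lt] at hn
  exact hn

set_option maxHeartbeats 1000000 in
/-- With `a_0 = 1`, `a_1 = 2` and `(M_i)` as in the construction of `E*`:
for every `ω ∈ {0,1}^ℕ`,
`limsup_n ((a_{ω₁}⋯a_{ω_n})^β / (a_{ω₁}⋯a_{ω_{⌊βn⌋}}) · ∏_{i=1}^n M_i)^{1/n} ≥ M + 1`,
and for every Bernoulli product measure `ν` on `{0,1}^ℕ` the limsup equals `M + 1`
`ν`-almost everywhere. -/
theorem stmt11 (β M : ℝ) (hβ : β ∈ Set.Ioo (0:ℝ) 1) (hM : (100:ℝ) ≤ M)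
    (N : ℕ → ℕ) (hN1 : N 1 = 1) (hNmono : StrictMono N)
    (hNlim : Filter.Tendsto (fun k => (N (k + 1) : ℝ) / (N k : ℝ)) Filter.atTop Filter.atTop)
    (Mseq : ℕ → ℝ)
    (hMseq : ∀ k : ℕ, 1 ≤ k → ∀ i : ℕ,
      (N (2 * k - 1) ≤ i → i < N (2 * k) → Mseq i = M) ∧
      (N (2 * k) ≤ i → i < N (2 * k + 1) → Mseq i = M + 1)) :
    (∀ ω : ℕ → Bool,
      M + 1 ≤ Filter.limsup (fun n : ℕ =>
        ((∏ k ∈ Finset.range n, aBit (ω k)) ^ β /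
            (∏ k ∈ Finset.range ⌊β * (n : ℝ)⌋₊, aBit (ω k)) *
          ∏ k ∈ Finset.range n, Mseq (k + 1)) ^ (1 / (n : ℝ))) Filter.atTop) ∧
    (∀ (ν : Measure (ℕ → Bool)) (p : Bool → ℝ),
      IsProbabilityMeasure ν → (∀ b, 0 ≤ p b) → p false + p true = 1 →
      (∀ (n : ℕ) (b : Fin n → Bool),
        ν {ω | ∀ k : Fin n, ω k = b k} = ENNReal.ofReal (∏ k, p (b k))) →
      ∀ᵐ ω ∂ν,
        Filter.limsup (fun n : ℕ =>
          ((∏ k ∈ Finset.range n, aBit (ω k)) ^ β /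
              (∏ k ∈ Finset.range ⌊β * (n : ℝ)⌋₊, aBit (ω k)) *
            ∏ k ∈ Finset.range n, Mseq (k + 1)) ^ (1 / (n : ℝ))) Filter.atTop = M + 1) := by
  obtain ⟨hβ0, hβ1⟩ := hβ
  have hM1 : (0:ℝ) < M + 1 := by linarith
  -- every index ≥ 1 is covered by some block
  have hNle : ∀ m : ℕ, m ≤ N m := fun m => hNmono.le_apply
  have hcov : ∀ j, 1 ≤ j → Mseq j = M ∨ Mseq j = M + 1 := by
    intro j hj
    have hP1 : 1 ≤ 1 ∧ N (2*1-1) ≤ j := ⟨le_refl 1, by simpa [hN1] using hj⟩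
    have hPk := Nat.findGreatest_spec (P := fun k => 1 ≤ k ∧ N (2*k-1) ≤ j) hj hP1
    set k := Nat.findGreatest (fun k => 1 ≤ k ∧ N (2*k-1) ≤ j) j with hkdef
    obtain ⟨hk1, hkj⟩ := hPk
    have hjlt : j < N (2*k+1) := by
      rcases le_or_gt (k+1) j with h | h
      · have hng := Nat.findGreatest_is_greatest (Nat.lt_succ_self k) h
        have h2 : ¬ (N (2*(k+1)-1) ≤ j) := fun hcontra => hng ⟨by omega, hcontra⟩
        have h21 : 2*(k+1)-1 = 2*k+1 := by omega
        rw [h21] at h2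
        omega
      · have hkj' : k ≤ j := Nat.findGreatest_le j
        have hkej : k = j := by omega
        have h3 := hNle (2*k+1)
        omega
    rcases lt_or_ge j (N (2*k)) with h | h
    · exact Or.inl ((hMseq k hk1 j).1 hkj h)
    · exact Or.inr ((hMseq k hk1 j).2 h hjlt)
  have hN1le : ∀ k, 1 ≤ k → 1 ≤ N (2*k) := by
    intro k hk
    have h1 : N 1 ≤ N (2*k) := hNmono.monotone (by omega)
    omega
  have hMseqpos : ∀ i, 1 ≤ i → (0:ℝ) < Mseq i := by
    intro i hi; rcases hcov i hi with h | h <;> rw [h] <;> linarith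
  have hlow : ∀ j, 1 ≤ j → Real.log (M+1) - 1 ≤ Real.log (Mseq j) := by
    intro j hj
    rcases hcov j hj with h | h <;> rw [h]
    · have h1 : Real.log (M+1) ≤ Real.log (2*M) := Real.log_le_log (by linarith) (by linarith)
      rw [Real.log_mul (by norm_num) (by positivity)] at h1
      have h2 : Real.log 2 ≤ 1 := by
        have h3 := Real.log_le_sub_one_of_pos (by norm_num : (0:ℝ) < 2)
        linarith
      linarith
    · linarith
  have hhigh : ∀ j, 1 ≤ j → Real.log (Mseq j) ≤ Real.log (M+1) := by
    intro j hj
    rcases hcov j hj with h | h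
    · rw [h]; exact Real.log_le_log (by linarith) (by linarith)
    · rw [h]
  have hlogpos : ∀ j, 1 ≤ j → 0 ≤ Real.log (Mseq j) := by
    intro j hj; rcases hcov j hj with h|h <;> rw [h] <;> exact Real.log_nonneg (by linarith)
  have hNlim2 : Filter.Tendsto (fun k => (N (2*k + 1) : ℝ) / (N (2*k) : ℝ))
      Filter.atTop Filter.atTop := by
    have h2 : Filter.Tendsto (fun k : ℕ => 2*k) Filter.atTop Filter.atTop :=
      Filter.tendsto_atTop_mono (fun k => (by omega : k ≤ 2 * k)) Filter.tendsto_id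
    exact hNlim.comp h2
  have hlog2pos : (0:ℝ) < Real.log 2 := Real.log_pos (by norm_num)
  have hlogM1 : (0:ℝ) ≤ Real.log (M+1) := Real.log_nonneg (by linarith)
  -- abbreviations
  set s : (ℕ → Bool) → ℕ → ℝ :=
    fun ω mm => ∑ k ∈ Finset.range mm, if ω k then (1:ℝ) else 0 with hsdef
  set q : ℕ → ℝ := fun nn => ∑ i ∈ Finset.range nn, Real.log (Mseq (i+1)) with hqdef
  set L : (ℕ → Bool) → ℕ → ℝ := fun ω nn =>
    ((β * s ω nn - s ω ⌊β * (nn:ℝ)⌋₊) * Real.log 2 + q nn) / nn with hLdef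
  have hs0 : ∀ ω mm, 0 ≤ s ω mm := by
    intro ω mm
    apply Finset.sum_nonneg
    intro k _
    by_cases h : ω k <;> simp [h]
  have hsle : ∀ ω mm, s ω mm ≤ mm := by
    intro ω mm
    calc s ω mm ≤ ∑ k ∈ Finset.range mm, (1:ℝ) :=
      Finset.sum_le_sum (fun k _ => by by_cases h : ω k <;> simp [h])
    _ = mm := by simp
  have hq0 : ∀ nn, 0 ≤ q nn :=
    fun nn => Finset.sum_nonneg fun i _ => hlogpos (i+1) (by omega)
  have hqle : ∀ nn : ℕ, q nn ≤ nn * Real.log (M+1) := by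
    intro nn
    calc q nn ≤ ∑ i ∈ Finset.range nn, Real.log (M+1) :=
      Finset.sum_le_sum (fun i _ => hhigh (i+1) (by omega))
    _ = nn * Real.log (M+1) := by
      rw [Finset.sum_const, Finset.card_range, nsmul_eq_mul]
  -- the bridge
  have haBit : ∀ b, (0:ℝ) < aBit b := by intro b; cases b <;> norm_num [aBit]
  have hbridge : ∀ (ω : ℕ → Bool) (nn : ℕ),
      ((∏ k ∈ Finset.range nn, aBit (ω k)) ^ β /
          (∏ k ∈ Finset.range ⌊β * (nn : ℝ)⌋₊, aBit (ω k)) *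
        ∏ k ∈ Finset.range nn, Mseq (k + 1)) ^ (1 / (nn : ℝ)) = Real.exp (L ω nn) := by
    intro ω nn
    have hP : ∀ mm : ℕ, (0:ℝ) < ∏ k ∈ Finset.range mm, aBit (ω k) :=
      fun mm => Finset.prod_pos (fun k _ => haBit _)
    have hQ : (0:ℝ) < ∏ k ∈ Finset.range nn, Mseq (k+1) :=
      Finset.prod_pos (fun k _ => hMseqpos _ (by omega))
    have hXpos : (0:ℝ) < (∏ k ∈ Finset.range nn, aBit (ω k)) ^ β /
        (∏ k ∈ Finset.range ⌊β * (nn : ℝ)⌋₊, aBit (ω k)) *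
        ∏ k ∈ Finset.range nn, Mseq (k + 1) :=
      mul_pos (div_pos (Real.rpow_pos_of_pos (hP _) _) (hP _)) hQ
    rw [Real.rpow_def_of_pos hXpos]
    congr 1
    have hlogP : ∀ mm : ℕ, Real.log (∏ k ∈ Finset.range mm, aBit (ω k))
        = s ω mm * Real.log 2 := by
      intro mm
      rw [Real.log_prod (fun k _ => (haBit _).ne'), hsdef]
      dsimp only
      rw [Finset.sum_mul]
      apply Finset.sum_congr rfl
      intro k _
      by_cases h : ω k <;> simp [aBit, h]
    have hlogQ : Real.log (∏ k ∈ Finset.range nn, Mseq (k+1)) = q nn := by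
      rw [Real.log_prod (fun k _ => (hMseqpos (k+1) (by omega)).ne'), hqdef]
    rw [Real.log_mul (ne_of_gt (div_pos (Real.rpow_pos_of_pos (hP _) _) (hP _))) (ne_of_gt hQ),
      Real.log_div (ne_of_gt (Real.rpow_pos_of_pos (hP _) _)) (ne_of_gt (hP _)),
      Real.log_rpow (hP _), hlogP, hlogP, hlogQ, hLdef]
    dsimp only
    ring
  -- boundedness of L
  have hLb : ∀ ω nn, |L ω nn| ≤ 2 * Real.log 2 + Real.log (M+1) := by
    intro ω nn
    rcases Nat.eq_zero_or_pos nn with h0 | hpos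
    · subst h0
      rw [hLdef]
      simp only [Nat.cast_zero, div_zero, abs_zero]
      linarith
    · have hnn : (0:ℝ) < nn := by exact_mod_cast hpos
      rw [hLdef]
      dsimp only
      rw [abs_div, abs_of_pos hnn, div_le_iff₀ hnn]
      have hfl : (⌊β * (nn:ℝ)⌋₊ : ℝ) ≤ nn := by
        have h1 : β * (nn:ℝ) ≤ nn := mul_le_of_le_one_left (Nat.cast_nonneg _) hβ1.le
        have h2 : (⌊β * (nn:ℝ)⌋₊:ℝ) ≤ β*nn := Nat.floor_le (by positivity)
        linarith
      have hsf : s ω ⌊β * (nn:ℝ)⌋₊ ≤ nn := le_trans (hsle _ _) hfl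
      have hbs : β * s ω nn ≤ nn := by
        have h1 : β * s ω nn ≤ s ω nn := by nlinarith [hs0 ω nn]
        linarith [hsle ω nn]
      have habs1 : |(β * s ω nn - s ω ⌊β * (nn:ℝ)⌋₊) * Real.log 2|
          ≤ 2 * Real.log 2 * nn := by
        rw [abs_mul, abs_of_pos hlog2pos]
        have h1 : |β * s ω nn - s ω ⌊β*(nn:ℝ)⌋₊| ≤ 2 * nn := by
          rw [abs_le]
          constructor
          · have := hs0 ω nn
            nlinarith [hβ0.le]
          · linarith [hs0 ω ⌊β*(nn:ℝ)⌋₊]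
        nlinarith [hlog2pos]
      calc |(β * s ω nn - s ω ⌊β * (nn:ℝ)⌋₊) * Real.log 2 + q nn|
          ≤ |(β * s ω nn - s ω ⌊β * (nn:ℝ)⌋₊) * Real.log 2| + |q nn| := abs_add_le _ _
      _ ≤ 2 * Real.log 2 * nn + nn * Real.log (M+1) := by
          rw [abs_of_nonneg (hq0 nn)]
          linarith [hqle nn]
      _ = (2 * Real.log 2 + Real.log (M+1)) * nn := by ring
  have hbddL : ∀ ω, Filter.IsBoundedUnder (· ≤ ·) Filter.atTop (L ω) :=
    fun ω => Filter.isBoundedUnder_of ⟨2 * Real.log 2 + Real.log (M+1),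
      fun n => (abs_le.1 (hLb ω n)).2⟩
  have hcobddL : ∀ ω, Filter.IsCoboundedUnder (· ≤ ·) Filter.atTop (L ω) :=
    fun ω => Filter.IsBoundedUnder.isCoboundedUnder_le
      (Filter.isBoundedUnder_of ⟨-(2 * Real.log 2 + Real.log (M+1)),
        fun n => (abs_le.1 (hLb ω n)).1⟩)
  have hA : ∀ ω, Real.log (M+1) ≤ Filter.limsup (L ω) Filter.atTop := by
    intro ω
    exact lemA β M hβ0 hβ1 N hNmono hN1le hNlim2 Mseq hlow
      (fun k hk i h1 h2 => (hMseq k hk i).2 h1 h2)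
      (s ω) (hs0 ω) (hsle ω) (L ω) (2 * Real.log 2 + Real.log (M+1)) (hLb ω)
      (fun nn => by rw [hLdef])
  have hmap : ∀ ω, Filter.limsup (fun nn : ℕ => Real.exp (L ω nn)) Filter.atTop
      = Real.exp (Filter.limsup (L ω) Filter.atTop) := by
    intro ω
    have h := Real.exp_monotone.map_limsup_of_continuousAt (F := Filter.atTop) (L ω)
      (Real.continuous_exp.continuousAt) (hbddL ω) (hcobddL ω)
    rw [Function.comp_def] at h
    exact h.symm
  have hlimF : ∀ ω : ℕ → Bool, Filter.limsup (fun n : ℕ =>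
        ((∏ k ∈ Finset.range n, aBit (ω k)) ^ β /
            (∏ k ∈ Finset.range ⌊β * (n : ℝ)⌋₊, aBit (ω k)) *
          ∏ k ∈ Finset.range n, Mseq (k + 1)) ^ (1 / (n : ℝ))) Filter.atTop
      = Real.exp (Filter.limsup (L ω) Filter.atTop) := by
    intro ω
    rw [← hmap ω]
    apply Filter.limsup_congr
    exact Filter.Eventually.of_forall (fun nn => hbridge ω nn)
  constructor
  · intro ω
    rw [hlimF ω]
    calc M + 1 = Real.exp (Real.log (M+1)) := (Real.exp_log hM1).symm
    _ ≤ _ := Real.exp_le_exp.2 (hA ω)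
  · intro ν p hprob hp hpsum hcyl
    have hae : ∀ᵐ ω ∂ν, ∀ j : ℕ, ∀ᶠ nn in Filter.atTop,
        β * (∑ k ∈ Finset.range nn, if ω k then (1:ℝ) else 0)
          - (∑ k ∈ Finset.range ⌊β * (nn:ℝ)⌋₊, if ω k then (1:ℝ) else 0)
          ≤ (1/((j:ℝ)+1)) * nn := by
      rw [MeasureTheory.ae_all_iff]
      intro j
      have hε0 : (0:ℝ) < 1/((j:ℝ)+1) := by positivity
      have hε1 : (1/((j:ℝ)+1):ℝ) ≤ 1 := by
        rw [div_le_one (by positivity)]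
        linarith [Nat.cast_nonneg (α := ℝ) j]
      exact lemB β hβ0 hβ1 ν p hp hpsum hcyl (1/((j:ℝ)+1)) hε0 hε1
    filter_upwards [hae] with ω hω
    have hup : Filter.limsup (L ω) Filter.atTop ≤ Real.log (M+1) := by
      have hstep : ∀ j : ℕ, Filter.limsup (L ω) Filter.atTop
          ≤ Real.log (M+1) + Real.log 2 * (1/((j:ℝ)+1)) := by
        intro j
        apply Filter.limsup_le_of_le (hcobddL ω)
        filter_upwards [hω j, Filter.eventually_ge_atTop 1] with nn hnn h1nn
        have hnpos : (0:ℝ) < nn := by exact_mod_cast h1nn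
        rw [hLdef]
        dsimp only
        rw [div_le_iff₀ hnpos]
        have hgl : (β * s ω nn - s ω ⌊β*(nn:ℝ)⌋₊) * Real.log 2
            ≤ (1/((j:ℝ)+1)) * nn * Real.log 2 := by
          apply mul_le_mul_of_nonneg_right _ hlog2pos.le
          exact hnn
        have hql := hqle nn
        nlinarith [hgl, hql]
      have hlim : Filter.Tendsto (fun j : ℕ => Real.log (M+1) + Real.log 2 * (1/((j:ℝ)+1)))
          Filter.atTop (nhds (Real.log (M+1))) := by
        have h1 : Filter.Tendsto (fun j : ℕ => (1:ℝ)/((j:ℝ)+1)) Filter.atTop (nhds 0) :=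
          tendsto_one_div_add_atTop_nhds_zero_nat
        have h2 := (tendsto_const_nhds (x := Real.log (M+1)) (f := Filter.atTop (α := ℕ))).add
          ((tendsto_const_nhds (x := Real.log 2) (f := Filter.atTop (α := ℕ))).mul h1)
        simpa using h2
      exact ge_of_tendsto' hlim hstep
    rw [hlimF ω, le_antisymm hup (hA ω), Real.exp_log hM1]
end

section
/- Let β ∈ (0,1), M ≥ 100, and H(p) = −p log p − (1−p) log(1−p) (with 0 log 0 = 0). Then the following two strict inequalities hold: (1) max_{p∈[0,1]} H(p)/(log(M+1) + βp log 2) < (log 2)/(log(M+1)); and (2) max_{(p,q)∈[0,1]²} (β H(p) + (1−β) H(q)) / (log M + β(1−β)(q−p) log 2) < max_{p∈[0,1]} H(p)/(log M − β(1−p) log 2). -/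
open Filter Set Metric MeasureTheory Topology
open scoped ENNReal

lemma Hent_eq_binEntropy : Hent = Real.binEntropy := by
  funext p; simp [Hent, Real.binEntropy, Real.log_inv]; ring

lemma Hent_continuous : Continuous Hent := by
  rw [Hent_eq_binEntropy]; exact Real.binEntropy_continuous

lemma Hent_le_log_two (p : ℝ) : Hent p ≤ Real.log 2 := by
  rw [Hent_eq_binEntropy]; exact Real.binEntropy_le_log_two

lemma Hent_nonneg {p : ℝ} (h0 : 0 ≤ p) (h1 : p ≤ 1) : 0 ≤ Hent p := by
  rw [Hent_eq_binEntropy]; exact Real.binEntropy_nonneg h0 h1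

lemma Hent_half : Hent (1/2) = Real.log 2 := by
  rw [Hent_eq_binEntropy]; exact Real.binEntropy_eq_log_two.mpr (by norm_num)

lemma Hent_one : Hent 1 = 0 := by
  rw [Hent_eq_binEntropy]; exact Real.binEntropy_eq_zero.mpr (Or.inr rfl)

set_option maxHeartbeats 1000000 in
/-- For `β ∈ (0,1)` and `M ≥ 100`:
(1) `max_{p∈[0,1]} H(p)/(log(M+1) + βp log 2) < log 2 / log(M+1)`;
(2) `max_{(p,q)∈[0,1]²} (βH(p)+(1−β)H(q))/(log M + β(1−β)(q−p) log 2)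
      < max_{p∈[0,1]} H(p)/(log M − β(1−p) log 2)`. -/
theorem stmt15 (β M : ℝ) (hβ : β ∈ Set.Ioo (0:ℝ) 1) (hM : (100:ℝ) ≤ M) :
    sSup ((fun p => Hent p / (Real.log (M + 1) + β * p * Real.log 2)) '' Set.Icc 0 1) <
      Real.log 2 / Real.log (M + 1) ∧
    Dfun β (Real.log M) <
      sSup ((fun p => Hent p / (Real.log M - β * (1 - p) * Real.log 2)) '' Set.Icc 0 1) := by
  obtain ⟨hβ0, hβ1⟩ := hβ
  have h2 : (0:ℝ) < Real.log 2 := Real.log_pos (by norm_num)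
  have hne : (Set.Icc (0:ℝ) 1).Nonempty := ⟨0, by norm_num⟩
  constructor
  · -- Part 1
    set L := Real.log (M + 1) with hLdef
    have hL2 : Real.log 2 < L := Real.log_lt_log (by norm_num) (by linarith)
    have hL0 : (0:ℝ) < L := h2.trans hL2
    have hden : ∀ p ∈ Set.Icc (0:ℝ) 1, 0 < L + β * p * Real.log 2 := by
      intro p hp
      have : 0 ≤ β * p * Real.log 2 := mul_nonneg (mul_nonneg hβ0.le hp.1) h2.le
      linarith
    have key1 : ∀ p ∈ Set.Icc (0:ℝ) 1,
        Hent p / (L + β * p * Real.log 2) < Real.log 2 / L := by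
      intro p hp
      rcases hp.1.eq_or_lt with h | hp0
      · rw [← h]
        have : Hent 0 = 0 := by simp [Hent]
        rw [this]
        simpa using div_pos h2 hL0
      · have hdp : L < L + β * p * Real.log 2 := by
          nlinarith [mul_pos (mul_pos hβ0 hp0) h2]
        calc Hent p / (L + β * p * Real.log 2)
            ≤ Real.log 2 / (L + β * p * Real.log 2) := by
              gcongr
              exact Hent_le_log_two p
          _ < Real.log 2 / L := div_lt_div_of_pos_left h2 hL0 hdp
    have hcont : ContinuousOn (fun p => Hent p / (L + β * p * Real.log 2))
        (Set.Icc (0:ℝ) 1) := by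
      apply ContinuousOn.div Hent_continuous.continuousOn
      · fun_prop
      · exact fun p hp => (hden p hp).ne'
    obtain ⟨x0, hx0, hmax⟩ := isCompact_Icc.exists_isMaxOn hne hcont
    refine lt_of_le_of_lt (csSup_le (hne.image _) ?_) (key1 x0 hx0)
    rintro _ ⟨p, hp, rfl⟩
    exact hmax hp
  · -- Part 2
    set lam := Real.log M with hlamdef
    have hlam2 : Real.log 2 < lam := Real.log_lt_log (by norm_num) (by linarith)
    have hlam0 : (0:ℝ) < lam := h2.trans hlam2
    set g := fun p : ℝ => Hent p / (lam - β * (1 - p) * Real.log 2) with hg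
    have heqpos : ∀ q ∈ Set.Icc (0:ℝ) 1, 0 < lam - β * (1 - q) * Real.log 2 := by
      intro q hq
      have h1 : β * (1 - q) ≤ 1 := by
        nlinarith [mul_nonneg (by linarith : (0:ℝ) ≤ 1 - β)
          (by linarith [hq.2] : (0:ℝ) ≤ 1 - q), hq.1]
      have h3 : β * (1 - q) * Real.log 2 ≤ Real.log 2 := by
        nlinarith [mul_nonneg (by linarith : (0:ℝ) ≤ 1 - β * (1 - q)) h2.le]
      linarith
    have hbdd : BddAbove (g '' Set.Icc 0 1) := by
      refine ⟨Real.log 2 / (lam - Real.log 2), ?_⟩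
      rintro _ ⟨q, hq, rfl⟩
      have hq1 : 0 < lam - β * (1 - q) * Real.log 2 := heqpos q hq
      have hq2 : lam - Real.log 2 ≤ lam - β * (1 - q) * Real.log 2 := by
        have h1 : β * (1 - q) ≤ 1 := by
          nlinarith [mul_nonneg (by linarith : (0:ℝ) ≤ 1 - β)
            (by linarith [hq.2] : (0:ℝ) ≤ 1 - q), hq.1]
        nlinarith [mul_nonneg (by linarith : (0:ℝ) ≤ 1 - β * (1 - q)) h2.le]
      calc g q ≤ Real.log 2 / (lam - β * (1 - q) * Real.log 2) :=
            by rw [hg]; exact (div_le_div_iff_of_pos_right hq1).mpr (Hent_le_log_two q)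
        _ ≤ Real.log 2 / (lam - Real.log 2) :=
            div_le_div_of_nonneg_left h2.le (by linarith) hq2
    have hgq_le : ∀ q ∈ Set.Icc (0:ℝ) 1, g q ≤ sSup (g '' Set.Icc 0 1) := by
      intro q hq; exact le_csSup hbdd ⟨q, hq, rfl⟩
    set T := sSup (g '' Set.Icc 0 1) with hT
    have hhalfpos : 0 < lam - β * (1 - (1:ℝ)/2) * Real.log 2 :=
      heqpos _ (by norm_num)
    have hA : Real.log 2 / lam < T := by
      have h1 : Real.log 2 / lam < g (1/2) := by
        rw [hg]
        simp only [Hent_half]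
        exact div_lt_div_of_pos_left h2 hhalfpos (by nlinarith)
      exact h1.trans_le (hgq_le _ (by norm_num))
    have hT0 : 0 < T := (div_pos h2 hlam0).trans hA
    -- pointwise bound
    have key2 : ∀ p ∈ Set.Icc (0:ℝ) 1, ∀ q ∈ Set.Icc (0:ℝ) 1,
        (β * Hent p + (1 - β) * Hent q) /
          (lam + β * (1 - β) * (q - p) * Real.log 2) < T := by
      intro p hp q hq
      have ha0 : 0 ≤ Hent p := Hent_nonneg hp.1 hp.2
      have hb0 : 0 ≤ Hent q := Hent_nonneg hq.1 hq.2
      have haL : Hent p ≤ Real.log 2 := Hent_le_log_two p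
      have hbb : 0 < β * (1 - β) := mul_pos hβ0 (by linarith)
      have hbb4 : β * (1 - β) ≤ 1/4 := by nlinarith [sq_nonneg (β - 1/2)]
      have hden : 0 < lam + β * (1 - β) * (q - p) * Real.log 2 := by
        nlinarith [mul_nonneg (mul_nonneg hbb.le h2.le)
          (by linarith [hq.1, hp.2] : (0:ℝ) ≤ q - p + 1)]
      have heq : 0 < lam - β * (1 - q) * Real.log 2 := heqpos q hq
      have hgqT : g q ≤ T := hgq_le q hq
      by_cases hp1 : p = 1
      · subst hp1
        rcases hb0.eq_or_lt with hb | hb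
        · have hnum : β * Hent 1 + (1 - β) * Hent q = 0 := by
            rw [Hent_one, ← hb]; ring
          rw [hnum, zero_div]; exact hT0
        · have h1 : (β * Hent 1 + (1 - β) * Hent q) /
              (lam + β * (1 - β) * (q - 1) * Real.log 2) < g q := by
            rw [hg, div_lt_div_iff₀ hden heq, Hent_one]
            nlinarith [mul_pos hb (mul_pos hβ0 hlam0)]
          exact h1.trans_le hgqT
      · have hp1' : p < 1 := lt_of_le_of_ne hp.2 hp1
        have hd0 : 0 < lam + β * (q - p) * Real.log 2 := by
          nlinarith [mul_nonneg (mul_nonneg hβ0.le h2.le)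
            (by linarith [hq.1, hp.2] : (0:ℝ) ≤ q - p + 1)]
        by_cases hc : Hent p * (lam + β * (q - p) * Real.log 2) ≤ Hent q * lam
        · rcases hb0.eq_or_lt with hb | hb
          · have hazero : Hent p = 0 := by nlinarith
            have hnum : β * Hent p + (1 - β) * Hent q = 0 := by
              rw [hazero, ← hb]; ring
            rw [hnum, zero_div]; exact hT0
          · have h1 : (β * Hent p + (1 - β) * Hent q) /
                (lam + β * (1 - β) * (q - p) * Real.log 2) ≤
                Hent q / (lam + β * (q - p) * Real.log 2) := by
              rw [div_le_div_iff₀ hden hd0]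
              nlinarith [mul_nonneg hβ0.le (by linarith : 0 ≤ Hent q * lam -
                Hent p * (lam + β * (q - p) * Real.log 2))]
            have h2' : Hent q / (lam + β * (q - p) * Real.log 2) < g q := by
              rw [hg]
              exact div_lt_div_of_pos_left hb heq
                (by nlinarith [mul_pos (mul_pos hβ0 (by linarith : (0:ℝ) < 1 - p)) h2])
            exact h1.trans_lt (h2'.trans_le hgqT)
        · push_neg at hc
          have h1 : (β * Hent p + (1 - β) * Hent q) /
              (lam + β * (1 - β) * (q - p) * Real.log 2) < Hent p / lam := by
            rw [div_lt_div_iff₀ hden hlam0]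
            nlinarith [mul_pos (by linarith : (0:ℝ) < 1 - β)
              (by linarith : 0 < Hent p * (lam + β * (q - p) * Real.log 2) - Hent q * lam)]
          have h2' : Hent p / lam ≤ Real.log 2 / lam := by gcongr
          exact h1.trans_le (h2'.trans hA.le)
    -- assemble via compactness on the square
    have hsq : IsCompact (Set.Icc (0:ℝ) 1 ×ˢ Set.Icc (0:ℝ) 1) :=
      isCompact_Icc.prod isCompact_Icc
    have hsqne : (Set.Icc (0:ℝ) 1 ×ˢ Set.Icc (0:ℝ) 1).Nonempty :=
      ⟨(0, 0), by simp⟩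
    have hFc : ContinuousOn (fun pq : ℝ × ℝ =>
        (β * Hent pq.1 + (1 - β) * Hent pq.2) /
          (lam + β * (1 - β) * (pq.2 - pq.1) * Real.log 2))
        (Set.Icc (0:ℝ) 1 ×ˢ Set.Icc (0:ℝ) 1) := by
      apply ContinuousOn.div
      · exact ((continuous_const.mul (Hent_continuous.comp continuous_fst)).add
          (continuous_const.mul (Hent_continuous.comp continuous_snd))).continuousOn
      · fun_prop
      · rintro ⟨p, q⟩ hpq
        have hbb : 0 < β * (1 - β) := mul_pos hβ0 (by linarith)
        have hbb4 : β * (1 - β) ≤ 1/4 := by nlinarith [sq_nonneg (β - 1/2)]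
        have := hpq.1
        have := hpq.2
        refine ne_of_gt ?_
        nlinarith [mul_nonneg (mul_nonneg hbb.le h2.le)
          (by linarith [hpq.2.1, hpq.1.2] : (0:ℝ) ≤ q - p + 1)]
    obtain ⟨x0, hx0, hmax⟩ := hsq.exists_isMaxOn hsqne hFc
    rw [Dfun]
    refine lt_of_le_of_lt (csSup_le (hsqne.image _) ?_)
      (key2 x0.1 hx0.1 x0.2 hx0.2)
    rintro _ ⟨pq, hpq, rfl⟩
    exact hmax hpq
end
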